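/- arXiv:2601.21882 — 9 statements merged into one kernel-verified Lean document; each statement's English description precedes it below -/
import Mathlib

section
/- There exists a function f : ℝ → ℝ such that the induced map on finite multisets of reals, sending a multiset {r₁, ..., r_k} to the sum Σᵢ f(rᵢ), is injective (i.e., two finite multisets of reals with equal sums of f-values must be equal as multisets). -/
/-!
A multiset `m` of elements of `ι` is determined by its multiplicity function, so for a linearly
independent family `v` over a ring of characteristic zero the sum `Σ_{i ∈ m} v i` determines `m`.
A Hamel basis of `ℝ` over `ℚ` has cardinality `#ℝ`, so it can be indexed by `ℝ` itself.
-/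

theorem Multiset.sum_map_eq_linearCombination {ι R M : Type*} [DecidableEq ι] [Semiring R]
    [AddCommMonoid M] [Module R M] (v : ι → M) (m : Multiset ι) :
    (m.map v).sum =
      Finsupp.linearCombination R v (m.toFinsupp.mapRange Nat.cast Nat.cast_zero) := by
  induction m using Multiset.induction_on with
  | empty => simp
  | cons a m ih =>
    rw [← Multiset.singleton_add, Multiset.toFinsupp_add, Finsupp.mapRange_add Nat.cast_add]
    simp [ih]

theorem LinearIndependent.injective_multiset_sum_map {ι R M : Type*} [Semiring R] [CharZero R]
    [AddCommMonoid M] [Module R M] {v : ι → M} (hv : LinearIndependent R v) :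
    Function.Injective fun m : Multiset ι => (m.map v).sum := by
  classical
  simp only [Multiset.sum_map_eq_linearCombination (R := R)]
  exact Function.Injective.comp hv <|
    (Finsupp.mapRange_injective _ _ Nat.cast_injective).comp Multiset.toFinsupp.injective

/-- There exists a moment-injective function `f : ℝ → ℝ`: the induced map on finite
multisets of reals, sending `{r₁, …, r_k}` to `Σᵢ f rᵢ`, is injective. -/
theorem exists_moment_injective_real :
    ∃ f : ℝ → ℝ, Function.Injective (fun m : Multiset ℝ => (m.map f).sum) := by
  let B := Module.Basis.ofVectorSpace ℚ ℝ
  obtain ⟨e⟩ : Nonempty (ℝ ≃ Module.Basis.ofVectorSpaceIndex ℚ ℝ) := by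
    rw [← Cardinal.eq, B.mk_eq_rank'', Real.rank_rat_real, Cardinal.mk_real]
  exact ⟨B ∘ e, (B.linearIndependent.comp e e.injective).injective_multiset_sum_map⟩
end

section
/- The map from finite multisets of natural numbers to ℝ sending {n₁,...,n_k} to Σᵢ e^{nᵢ} is injective. -/
/-!
`∑ n ∈ m, e ^ n` is the value at `e` of the integer polynomial `∑ n ∈ m, X ^ n`, whose
coefficients are the multiplicities in `m`, so injectivity amounts to the transcendence of `e`.

For that we follow Hermite. If `q(e) = 0` with `q ∈ ℤ[X]`, `q(0) ≠ 0` and `deg q = N`, Hermite's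
polynomials `X ^ (p - 1) * f ^ p` for `f = ∏ (X - k)`, `k = 1, …, N`, provide for every large
prime `p` an integer `n` prime to `p` and `g ∈ ℤ[X]` with `|n e ^ k - p g(k)| ≤ c ^ p / (p - 1)!`
(`LindemannWeierstrass.exp_polynomial_approx`). Then `n q(0) + p ∑ q_k g(k)` is an integer
prime to `p`, yet it equals `-∑ q_k (n e ^ k - p g(k))`, which has absolute value `< 1` for
large `p`.
-/

open Polynomial Finset Filter
open scoped Nat

lemma exists_prime_gt_mul_pow_lt_factorial (M : ℕ) (a c : ℝ) :
    ∃ p, M < p ∧ p.Prime ∧ a * c ^ p < (p - 1)! := by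
  obtain ⟨N, hN⟩ := eventually_atTop.1 (FloorSemiring.eventually_mul_pow_lt_factorial_sub a c 1)
  obtain ⟨p, hp, hprime⟩ := Nat.exists_infinite_primes (max N (M + 1))
  exact ⟨p, by omega, hprime, hN p (le_of_max_le_left hp)⟩

lemma eval_zero_prod_X_sub_succ_ne_zero (N : ℕ) :
    (∏ i ∈ range N, (X - C ((i : ℤ) + 1))).eval 0 ≠ 0 := by
  rw [eval_prod, prod_ne_zero_iff]
  intro i _
  simp only [eval_sub, eval_X, eval_C]
  omega

lemma succ_mem_aroots_prod_X_sub_succ {N i : ℕ} (hi : i < N) :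
    ((i : ℂ) + 1) ∈ (∏ i ∈ range N, (X - C ((i : ℤ) + 1))).aroots ℂ := by
  rw [mem_aroots]
  refine ⟨(monic_prod_of_monic _ _ fun j _ => monic_X_sub_C _).ne_zero, ?_⟩
  rw [map_prod]
  exact prod_eq_zero (mem_range.2 hi) (by simp)

lemma aeval_exp_one_eq_coeff_zero_add_sum (q : ℤ[X]) :
    aeval (Complex.exp 1) q =
      q.coeff 0 + ∑ i ∈ range q.natDegree, q.coeff (i + 1) * Complex.exp ((i : ℂ) + 1) := by
  rw [aeval_eq_sum_range, sum_range_succ', add_comm]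
  congr 1
  · simp
  · refine sum_congr rfl fun i _ => ?_
    rw [zsmul_eq_mul, ← Complex.exp_nat_mul, mul_one]
    push_cast
    rfl

lemma intCast_eq_neg_sum_of_aeval_exp_one_eq_zero {q : ℤ[X]}
    (hq : aeval (Complex.exp 1) q = 0) (n : ℤ) (p : ℕ) (g : ℤ[X]) :
    ((n * q.coeff 0 + p * ∑ i ∈ range q.natDegree, q.coeff (i + 1) * g.eval ((i : ℤ) + 1) : ℤ) :
      ℂ) = -∑ i ∈ range q.natDegree, q.coeff (i + 1) *
        (n • Complex.exp ((i : ℂ) + 1) - p • aeval ((i : ℂ) + 1) g) := by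
  have hg (i : ℕ) : aeval ((i : ℂ) + 1) g = ((g.eval ((i : ℤ) + 1) : ℤ) : ℂ) := by
    simpa using aeval_algebraMap_apply_eq_algebraMap_eval (A := ℂ) ((i : ℤ) + 1) g
  have hsum : ∑ i ∈ range q.natDegree, q.coeff (i + 1) *
      (n • Complex.exp ((i : ℂ) + 1) - p • aeval ((i : ℂ) + 1) g) =
      n * ∑ i ∈ range q.natDegree, q.coeff (i + 1) * Complex.exp ((i : ℂ) + 1) -
        p * ∑ i ∈ range q.natDegree, q.coeff (i + 1) * ((g.eval ((i : ℤ) + 1) : ℤ) : ℂ) := by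
    rw [mul_sum, mul_sum, ← sum_sub_distrib]
    refine sum_congr rfl fun i _ => ?_
    rw [hg, zsmul_eq_mul, nsmul_eq_mul]
    ring
  rw [aeval_exp_one_eq_coeff_zero_add_sum] at hq
  rw [hsum]
  push_cast
  linear_combination (n : ℂ) * hq

theorem aeval_exp_one_ne_zero_of_coeff_zero_ne_zero {q : ℤ[X]} (hq : q.coeff 0 ≠ 0) :
    aeval (Complex.exp 1) q ≠ 0 := by
  intro hzero
  set N := q.natDegree
  set f : ℤ[X] := ∏ i ∈ range N, (X - C ((i : ℤ) + 1))
  obtain ⟨c, hc⟩ := LindemannWeierstrass.exp_polynomial_approx f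
    (eval_zero_prod_X_sub_succ_ne_zero N)
  obtain ⟨p, hp_gt, hp, hp_small⟩ := exists_prime_gt_mul_pow_lt_factorial
    (max (f.eval 0).natAbs (q.coeff 0).natAbs) (∑ i ∈ range N, ‖(q.coeff (i + 1) : ℂ)‖) c
  obtain ⟨n, hn, g, -, happrox⟩ := hc p (by omega) hp
  set S : ℤ := n * q.coeff 0 + p * ∑ i ∈ range N, q.coeff (i + 1) * g.eval ((i : ℤ) + 1)
  have hS_ndvd : ¬ (p : ℤ) ∣ S := by
    rw [dvd_add_left (dvd_mul_right _ _)]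
    intro h
    rcases Int.Prime.dvd_mul' hp h with h | h
    · exact hn h
    · exact absurd (Nat.le_of_dvd (Int.natAbs_pos.2 hq) (Int.natCast_dvd.1 h)) (by omega)
  have hS_lt : ‖(S : ℂ)‖ < 1 := by
    rw [intCast_eq_neg_sum_of_aeval_exp_one_eq_zero hzero, norm_neg]
    calc _ ≤ ∑ i ∈ range N, ‖(q.coeff (i + 1) : ℂ)‖ * (c ^ p / (p - 1)!) := by
          refine (norm_sum_le _ _).trans (sum_le_sum fun i hi => ?_)
          rw [norm_mul]
          exact mul_le_mul_of_nonneg_left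
            (happrox (succ_mem_aroots_prod_X_sub_succ (mem_range.1 hi))) (norm_nonneg _)
      _ < 1 := by
        rw [← sum_mul, mul_div_assoc', div_lt_one (by positivity)]
        exact hp_small
  have hS_ne : S ≠ 0 := fun h => hS_ndvd (h ▸ dvd_zero _)
  rw [Complex.norm_intCast] at hS_lt
  exact hS_lt.not_ge (by exact_mod_cast Int.one_le_abs hS_ne)

theorem transcendental_exp_one : Transcendental ℤ (Real.exp 1) := by
  rw [← transcendental_algebraMap_iff (A := ℂ) (algebraMap ℝ ℂ).injective]
  simp only [Complex.coe_algebraMap, Complex.ofReal_exp, Complex.ofReal_one]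
  intro h
  obtain ⟨q, hq0, hq⟩ := h.exists_nonzero_coeff_and_aeval_eq_zero
    (mem_nonZeroDivisors_of_ne_zero (Complex.exp_ne_zero 1))
  exact aeval_exp_one_ne_zero_of_coeff_zero_ne_zero hq0 hq

lemma coeff_multiset_sum_map_X_pow {R : Type*} [Semiring R] (m : Multiset ℕ) (k : ℕ) :
    (m.map (X ^ · : ℕ → R[X])).sum.coeff k = m.count k := by
  induction m using Multiset.induction_on with
  | empty => simp
  | cons n m ih => simp [coeff_X_pow, Multiset.count_cons, ih, add_comm]

lemma multiset_sum_map_X_pow_injective {R : Type*} [Semiring R] [CharZero R] :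
    Function.Injective fun m : Multiset ℕ => (m.map (X ^ · : ℕ → R[X])).sum := by
  intro m m' h
  ext k
  have := congr_arg (coeff · k) h
  simpa [coeff_multiset_sum_map_X_pow] using this

/-- The map sending a finite multiset `{n₁,…,n_k}` of naturals to `Σᵢ exp nᵢ` is
injective (moment-injectivity of `x ↦ exp x` on `ℕ`). -/
theorem multiset_exp_sum_injective :
    Function.Injective (fun m : Multiset ℕ => (m.map (fun n : ℕ => Real.exp n)).sum) := by
  have hF : (fun m : Multiset ℕ => (m.map (fun n : ℕ => Real.exp n)).sum) =
      aeval (Real.exp 1) ∘ fun m => (m.map (X ^ · : ℕ → ℤ[X])).sum := by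
    funext m
    simp [map_multiset_sum, Multiset.map_map, ← Real.exp_nat_mul]
  rw [hF]
  exact (transcendental_iff_injective.1 transcendental_exp_one).comp
    multiset_sum_map_X_pow_injective
end

section
/- There exist continuous functions f, g : ℝ → ℝ such that the function mapping a finite multiset {n₁,...,n_k} of natural numbers to g(Σᵢ f(nᵢ)) is a bijection from the set of finite multisets of natural numbers onto ℕ. -/
/-!
Index the primes increasingly as `p₀ < p₁ < ⋯`. Take `f` to be any continuous extension of
`n ↦ log pₙ` (Tietze; `ℕ` is closed in `ℝ`) and `g = exp - 1`. Then `m` is sent to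
`∏_{n ∈ m} pₙ - 1`, and by unique factorisation this is a bijection onto `ℕ`.
-/

open Nat

theorem exists_continuous_extension_natCast {Y : Type*} [TopologicalSpace Y]
    [TietzeExtension.{0} Y] (h : ℕ → Y) : ∃ F : C(ℝ, Y), ∀ n : ℕ, F n = h n := by
  obtain ⟨F, hF⟩ := (⟨h, continuous_of_discreteTopology⟩ : C(ℕ, Y)).exists_extension'
    Nat.isClosedEmbedding_coe_real
  exact ⟨F, congrFun hF⟩

noncomputable def Nat.nthPrimeEquiv : ℕ ≃ Nat.Primes :=
  Equiv.ofBijective (fun n => ⟨nth Nat.Prime n, prime_nth_prime n⟩)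
    ⟨fun _ _ h => nth_injective infinite_setOfPred_prime (congrArg Subtype.val h),
      fun p => ⟨count Nat.Prime p, Subtype.ext (nth_count p.2)⟩⟩

noncomputable def Nat.nthPrimeProdEquiv : Multiset ℕ ≃ ℕ :=
  (Functor.mapEquiv Multiset nthPrimeEquiv).trans
    (PNat.factorMultisetEquiv.symm.trans Equiv.pnatEquivNat)

theorem Nat.nthPrimeProdEquiv_add_one (m : Multiset ℕ) :
    nthPrimeProdEquiv m + 1 = (m.map (nth Nat.Prime)).prod := by
  change ((PrimeMultiset.prod (m.map nthPrimeEquiv : Multiset Nat.Primes)).natPred + 1 : ℕ) = _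
  rw [PNat.natPred_add_one]
  exact (PrimeMultiset.coe_prod _).trans (congrArg Multiset.prod (Multiset.map_map _ _ m))

theorem Real.exp_sum_map_log_natCast {α : Type*} (s : Multiset α) {u : α → ℕ}
    (hu : ∀ a ∈ s, 0 < u a) :
    exp (s.map fun a => log (u a)).sum = (s.map u).prod := by
  rw [exp_multiset_sum, Multiset.map_map, Nat.cast_multiset_prod, Multiset.map_map]
  congr 1
  refine Multiset.map_congr rfl fun a ha => ?_
  simp [exp_log, hu a ha]

/-- There exist continuous `f g : ℝ → ℝ` such that `m ↦ g (Σ_{n ∈ m} f n)` is a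
bijection from the finite multisets of natural numbers onto `ℕ ⊆ ℝ`. -/
theorem exists_continuous_multiset_bijection_onto_nat :
    ∃ f g : ℝ → ℝ, Continuous f ∧ Continuous g ∧
      Function.Injective (fun m : Multiset ℕ => g ((m.map (fun n : ℕ => f n)).sum)) ∧
      Set.range (fun m : Multiset ℕ => g ((m.map (fun n : ℕ => f n)).sum)) =
        Set.range (fun n : ℕ => (n : ℝ)) := by
  obtain ⟨f, hf⟩ := exists_continuous_extension_natCast fun n => Real.log (nth Nat.Prime n)
  have hsum (m : Multiset ℕ) :
      Real.exp (m.map fun n : ℕ => f n).sum - 1 = nthPrimeProdEquiv m := by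
    simp only [hf]
    rw [Real.exp_sum_map_log_natCast m fun n _ => (prime_nth_prime n).pos,
      ← nthPrimeProdEquiv_add_one]
    push_cast
    ring
  refine ⟨f, fun x => Real.exp x - 1, f.continuous, by fun_prop, ?_⟩
  simp only [hsum]
  exact ⟨Nat.cast_injective.comp nthPrimeProdEquiv.injective,
    nthPrimeProdEquiv.surjective.range_comp _⟩
end

section
/- Every unary semilinear function f : ℝ → ℝ is expressible as a composition of affine functions with rational coefficients, the ReLU function, and the Heaviside step function H (where H(x) = 1 if x ≥ 0 and 0 otherwise). -/
open FirstOrder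

/-- Function symbols of the language `(+, 0, 1)`. -/
inductive OrdAddFunc : ℕ → Type
  | zero : OrdAddFunc 0
  | one : OrdAddFunc 0
  | add : OrdAddFunc 2

/-- Relation symbols of the language `(<)`. -/
inductive OrdAddRel : ℕ → Type
  | lt : OrdAddRel 2

/-- The first-order language of the structure `(ℝ, +, <, 0, 1)`. -/
def ordAddLang : Language := ⟨OrdAddFunc, OrdAddRel⟩

instance : ordAddLang.Structure ℝ where
  funMap {n} f x :=
    match f with
    | OrdAddFunc.zero => 0
    | OrdAddFunc.one => 1
    | OrdAddFunc.add => x 0 + x 1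
  RelMap {n} r x :=
    match r with
    | OrdAddRel.lt => x 0 < x 1

/-- A function `ℝⁿ → ℝ` is semilinear if its graph is definable without parameters
in the structure `(ℝ, +, <, 0, 1)`. -/
def Semilinear {n : ℕ} (f : (Fin n → ℝ) → ℝ) : Prop :=
  Set.Definable (∅ : Set ℝ) ordAddLang
    {v : Fin (n + 1) → ℝ | f (fun i => v i.castSucc) = v (Fin.last n)}

/-- The class of unary functions obtained by composing affine functions with rational
coefficients, `ReLU`, and the Heaviside step function `H`. -/
inductive ReLUHClosure : (ℝ → ℝ) → Prop
  | id : ReLUHClosure (fun x => x)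
  | const (q : ℚ) : ReLUHClosure (fun _ => (q : ℝ))
  | add {f g : ℝ → ℝ} : ReLUHClosure f → ReLUHClosure g →
      ReLUHClosure (fun x => f x + g x)
  | smul (q : ℚ) {f : ℝ → ℝ} : ReLUHClosure f → ReLUHClosure (fun x => (q : ℝ) * f x)
  | relu {f : ℝ → ℝ} : ReLUHClosure f → ReLUHClosure (fun x => max (f x) 0)
  | heaviside {f : ℝ → ℝ} : ReLUHClosure f →
      ReLUHClosure (fun x => if 0 ≤ f x then (1 : ℝ) else 0)

/-!
Fourier–Motzkin elimination gives quantifier elimination for `(ℝ, +, <, 0, 1)`: every definable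
set is a finite union of sets cut out by rational affine equations and strict inequalities. For
the graph of `f`, a piece with no equation involving `y` has open fibres over `x`, impossible
inside a graph; a piece with such an equation lies on a rational line `y = α x + β`, along which
its other constraints change sign only at finitely many rational points. So `f` is rational
affine between finitely many rational breakpoints, and such a function is assembled from the
largest breakpoint down out of `ReLU (x - a)`, `H (x - a)` and `H (a - x)`.
-/

abbrev AffForm (n : ℕ) := (Fin n → ℚ) × ℚ

namespace AffForm

variable {n : ℕ}

noncomputable def eval (a : AffForm n) (v : Fin n → ℝ) : ℝ := ∑ i, (a.1 i : ℝ) * v i + a.2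

@[simp] lemma eval_add (a b : AffForm n) (v : Fin n → ℝ) :
    (a + b).eval v = a.eval v + b.eval v := by
  simp only [eval, Prod.fst_add, Prod.snd_add, Pi.add_apply, Rat.cast_add, add_mul,
    Finset.sum_add_distrib]
  ring

@[simp] lemma eval_smul (q : ℚ) (a : AffForm n) (v : Fin n → ℝ) :
    (q • a).eval v = q * a.eval v := by
  simp only [eval, Prod.smul_fst, Prod.smul_snd, Pi.smul_apply, smul_eq_mul, Rat.cast_mul,
    mul_add, Finset.mul_sum, mul_assoc]

@[simp] lemma eval_neg (a : AffForm n) (v : Fin n → ℝ) : (-a).eval v = -a.eval v := by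
  simpa using eval_smul (-1) a v

@[simp] lemma eval_sub (a b : AffForm n) (v : Fin n → ℝ) :
    (a - b).eval v = a.eval v - b.eval v := by
  simp [sub_eq_add_neg]

lemma eval_single (i : Fin n) (v : Fin n → ℝ) : AffForm.eval (Pi.single i 1, 0) v = v i := by
  simp [eval, Pi.single_apply, apply_ite (Rat.cast : ℚ → ℝ), ite_mul]

lemma eval_const (q : ℚ) (v : Fin n → ℝ) : AffForm.eval (0, q) v = q := by
  simp [eval]

def last (a : AffForm (n + 1)) : ℚ := a.1 (Fin.last n)

def init (a : AffForm (n + 1)) : AffForm n := (fun i => a.1 i.castSucc, a.2)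

@[simp] lemma last_smul (q : ℚ) (a : AffForm (n + 1)) : (q • a).last = q * a.last := rfl

lemma eval_snoc (a : AffForm (n + 1)) (v : Fin n → ℝ) (y : ℝ) :
    a.eval (Fin.snoc v y) = a.init.eval v + a.last * y := by
  simp only [eval, Fin.sum_univ_castSucc, Fin.snoc_castSucc, Fin.snoc_last, init, last]
  ring

def lastRoot (a : AffForm (n + 1)) : AffForm n := (-a.last⁻¹) • a.init

lemma eval_snoc_eq_mul (a : AffForm (n + 1)) (h : a.last ≠ 0) (v : Fin n → ℝ) (y : ℝ) :
    a.eval (Fin.snoc v y) = a.last * (y - a.lastRoot.eval v) := by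
  have h' : (a.last : ℝ) ≠ 0 := by exact_mod_cast h
  rw [eval_snoc, lastRoot, eval_smul]
  push_cast
  field_simp
  ring

lemma eval_snoc_eq_zero_iff (a : AffForm (n + 1)) (h : a.last ≠ 0) (v : Fin n → ℝ) (y : ℝ) :
    a.eval (Fin.snoc v y) = 0 ↔ y = a.lastRoot.eval v := by
  rw [a.eval_snoc_eq_mul h, mul_eq_zero, sub_eq_zero]
  exact or_iff_right (by exact_mod_cast h)

lemma eval_snoc_neg_iff_of_last_pos (a : AffForm (n + 1)) (h : 0 < a.last) (v : Fin n → ℝ)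
    (y : ℝ) : a.eval (Fin.snoc v y) < 0 ↔ y < a.lastRoot.eval v := by
  have h' : (0 : ℝ) < a.last := by exact_mod_cast h
  simp [a.eval_snoc_eq_mul h.ne', mul_neg_iff, h', h'.not_gt]

lemma eval_snoc_neg_iff_of_last_neg (a : AffForm (n + 1)) (h : a.last < 0) (v : Fin n → ℝ)
    (y : ℝ) : a.eval (Fin.snoc v y) < 0 ↔ a.lastRoot.eval v < y := by
  have h' : (a.last : ℝ) < 0 := by exact_mod_cast h
  simp [a.eval_snoc_eq_mul h.ne, mul_neg_iff, h', h'.not_gt]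

def elimLast (a b : AffForm (n + 1)) : AffForm n := (b.last • a - a.last • b).init

lemma eval_elimLast (a b : AffForm (n + 1)) (v : Fin n → ℝ) (y : ℝ) :
    (elimLast a b).eval v = b.last * a.eval (Fin.snoc v y) - a.last * b.eval (Fin.snoc v y) := by
  have : (b.last • a - a.last • b).last = 0 := by
    change b.last * a.last - a.last * b.last = 0
    ring
  have h := eval_snoc (b.last • a - a.last • b) v y
  rw [this, eval_sub, eval_smul, eval_smul] at h
  rw [elimLast, h]
  simp

end AffForm

inductive Atom (n : ℕ)
  | eq (a : AffForm n)
  | lt (a : AffForm n)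

namespace Atom

variable {n m : ℕ}

def form : Atom n → AffForm n
  | eq a => a
  | lt a => a

def map (g : AffForm n → AffForm m) : Atom n → Atom m
  | eq a => eq (g a)
  | lt a => lt (g a)

def Holds : Atom n → (Fin n → ℝ) → Prop
  | eq a, v => a.eval v = 0
  | lt a, v => a.eval v < 0

lemma holds_map_iff (α : Atom n) {g : AffForm n → AffForm m} {v : Fin n → ℝ} {w : Fin m → ℝ}
    {r : ℝ} (hr : 0 < r) (h : (g α.form).eval w = r * α.form.eval v) :
    (α.map g).Holds w ↔ α.Holds v := by
  cases α <;> simp_all [map, form, Holds, hr.ne', mul_neg_iff, hr.not_gt]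

lemma holds_iff_of_cmp_eq (α : Atom n) {v w : Fin n → ℝ}
    (h : cmp (α.form.eval v) 0 = cmp (α.form.eval w) 0) : α.Holds v ↔ α.Holds w := by
  cases α <;> simp only [form, Holds, ← cmp_eq_eq_iff, ← cmp_eq_lt_iff] at h ⊢ <;> rw [h]

end Atom

def basicSet {n : ℕ} (c : List (Atom n)) : Set (Fin n → ℝ) := {v | ∀ α ∈ c, α.Holds v}

@[simp] lemma basicSet_nil {n : ℕ} : basicSet ([] : List (Atom n)) = Set.univ := by
  simp [basicSet]

lemma basicSet_cons {n : ℕ} (α : Atom n) (c : List (Atom n)) :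
    basicSet (α :: c) = {v | α.Holds v} ∩ basicSet c := by
  ext; simp [basicSet]

lemma basicSet_append {n : ℕ} (c d : List (Atom n)) :
    basicSet (c ++ d) = basicSet c ∩ basicSet d := by
  ext; simp [basicSet, or_imp, forall_and]

/-- The quantifier-free definable sets of `(ℝ, +, <, 0, 1)`, in disjunctive normal form. -/
inductive IsRatSemilinear {n : ℕ} : Set (Fin n → ℝ) → Prop
  | empty : IsRatSemilinear ∅
  | basic (c : List (Atom n)) : IsRatSemilinear (basicSet c)
  | union {s t : Set (Fin n → ℝ)} : IsRatSemilinear s → IsRatSemilinear t → IsRatSemilinear (s ∪ t)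

namespace IsRatSemilinear

variable {n : ℕ} {s t : Set (Fin n → ℝ)}

lemma univ : IsRatSemilinear (Set.univ : Set (Fin n → ℝ)) := by
  simpa using basic ([] : List (Atom n))

lemma setOf_holds (α : Atom n) : IsRatSemilinear {v | α.Holds v} := by
  simpa [basicSet] using basic [α]

lemma inter (hs : IsRatSemilinear s) (ht : IsRatSemilinear t) : IsRatSemilinear (s ∩ t) := by
  induction hs with
  | empty => simpa using empty
  | union _ _ ih₁ ih₂ => rw [Set.union_inter_distrib_right]; exact ih₁.union ih₂
  | basic c =>
    induction ht with
    | empty => simpa using empty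
    | union _ _ ih₁ ih₂ => rw [Set.inter_union_distrib_left]; exact ih₁.union ih₂
    | basic d => rw [← basicSet_append]; exact basic _

lemma compl_setOf_holds (α : Atom n) : IsRatSemilinear {v | α.Holds v}ᶜ := by
  cases α with
  | eq a =>
    convert (setOf_holds (.lt a)).union (setOf_holds (.lt (-a))) using 1
    ext v
    simp [Atom.Holds, lt_or_lt_iff_ne]
  | lt a =>
    convert (setOf_holds (.lt (-a))).union (setOf_holds (.eq a)) using 1
    ext v
    simp [Atom.Holds, le_iff_lt_or_eq, eq_comm]

lemma compl_basicSet (c : List (Atom n)) : IsRatSemilinear (basicSet c)ᶜ := by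
  induction c with
  | nil => simp [empty]
  | cons α c ih => rw [basicSet_cons, Set.compl_inter]; exact (compl_setOf_holds α).union ih

lemma compl (hs : IsRatSemilinear s) : IsRatSemilinear sᶜ := by
  induction hs with
  | empty => simpa using univ
  | basic c => exact compl_basicSet c
  | union _ _ ih₁ ih₂ => rw [Set.compl_union]; exact ih₁.inter ih₂

end IsRatSemilinear

section Projection

open AffForm

variable {n : ℕ} {c : List (Atom (n + 1))}

/-- Substitutes the root of `f` for the last variable; scaling the pivot by `f.last` makes its
last coefficient positive, so that strict inequalities keep their direction. -/
def substLastRoot (f : AffForm (n + 1)) (c : List (Atom (n + 1))) : List (Atom n) :=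
  c.map (Atom.map (elimLast · (f.last • f)))

lemma snoc_lastRoot_mem_basicSet_iff {f : AffForm (n + 1)} (hf : f.last ≠ 0) (v : Fin n → ℝ) :
    Fin.snoc v (f.lastRoot.eval v) ∈ basicSet c ↔ v ∈ basicSet (substLastRoot f c) := by
  have hroot := (f.eval_snoc_eq_zero_iff hf v _).2 rfl
  have hpos : (0 : ℝ) < (f.last • f).last := by
    rw [last_smul]; exact_mod_cast mul_self_pos.2 hf
  simp only [basicSet, substLastRoot, Set.mem_ofPred_eq, List.forall_mem_map]
  refine forall₂_congr fun α _ => (α.holds_map_iff hpos ?_).symm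
  rw [eval_elimLast _ _ v (f.lastRoot.eval v), eval_smul, hroot]
  ring

lemma eq_lastRoot_of_snoc_mem_basicSet {f : AffForm (n + 1)}
    (hfc : .eq f ∈ c) (hf : f.last ≠ 0) {v : Fin n → ℝ} {y : ℝ}
    (h : Fin.snoc v y ∈ basicSet c) : y = f.lastRoot.eval v :=
  (f.eval_snoc_eq_zero_iff hf v y).1 (h _ hfc)

lemma setOf_exists_snoc_mem_basicSet_eq_substLastRoot {f : AffForm (n + 1)} (hfc : .eq f ∈ c)
    (hf : f.last ≠ 0) :
    {v | ∃ y, Fin.snoc v y ∈ basicSet c} = basicSet (substLastRoot f c) := by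
  ext v
  refine ⟨fun ⟨y, hy⟩ => ?_, fun h => ⟨_, (snoc_lastRoot_mem_basicSet_iff hf v).2 h⟩⟩
  rw [← snoc_lastRoot_mem_basicSet_iff hf, ← eq_lastRoot_of_snoc_mem_basicSet hfc hf hy]
  exact hy

def lowerForms (c : List (Atom (n + 1))) : List (AffForm (n + 1)) :=
  (c.filter (·.form.last < 0)).map Atom.form

def upperForms (c : List (Atom (n + 1))) : List (AffForm (n + 1)) :=
  (c.filter (0 < ·.form.last)).map Atom.form

lemma last_neg_of_mem_lowerForms {lo : AffForm (n + 1)}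
    (h : lo ∈ lowerForms c) : lo.last < 0 := by
  obtain ⟨α, hα, rfl⟩ := List.mem_map.1 h
  simpa using (List.mem_filter.1 hα).2

lemma last_pos_of_mem_upperForms {hi : AffForm (n + 1)}
    (h : hi ∈ upperForms c) : 0 < hi.last := by
  obtain ⟨α, hα, rfl⟩ := List.mem_map.1 h
  simpa using (List.mem_filter.1 hα).2

/-- Fourier–Motzkin elimination of the last variable, when it occurs in no equation. -/
def fourierMotzkin (c : List (Atom (n + 1))) : List (Atom n) :=
  (c.filter (·.form.last = 0)).map (Atom.map init) ++
    (lowerForms c ×ˢ upperForms c).map fun p => .lt (elimLast p.1 p.2)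

lemma eq_lt_form_of_last_ne_zero (hc : ∀ f, .eq f ∈ c → f.last = 0) {α : Atom (n + 1)} (hα : α ∈ c)
    (h : α.form.last ≠ 0) : α = .lt α.form := by
  cases α with
  | eq f => exact absurd (hc f hα) h
  | lt f => rfl

lemma holds_snoc_iff_of_last_eq_zero {α : Atom (n + 1)} (h : α.form.last = 0)
    (v : Fin n → ℝ) (y : ℝ) : α.Holds (Fin.snoc v y) ↔ (α.map init).Holds v :=
  (α.holds_map_iff one_pos (by rw [eval_snoc, h]; simp)).symm

lemma elimLast_neg_iff {lo hi : AffForm (n + 1)} (hlo : lo.last < 0) (hhi : 0 < hi.last)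
    (v : Fin n → ℝ) : (elimLast lo hi).eval v < 0 ↔ lo.lastRoot.eval v < hi.lastRoot.eval v := by
  have hroot := (hi.eval_snoc_eq_zero_iff hhi.ne' v _).2 rfl
  have hhi' : (0 : ℝ) < hi.last := by exact_mod_cast hhi
  rw [eval_elimLast _ _ v (hi.lastRoot.eval v), hroot, mul_zero, sub_zero,
    ← lo.eval_snoc_neg_iff_of_last_neg hlo]
  simp [mul_neg_iff, hhi', hhi'.not_gt]

lemma snoc_mem_basicSet_iff (hc : ∀ f, .eq f ∈ c → f.last = 0) (v : Fin n → ℝ) (y : ℝ) :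
    Fin.snoc v y ∈ basicSet c ↔
      v ∈ basicSet ((c.filter (·.form.last = 0)).map (Atom.map init)) ∧
      (∀ lo ∈ lowerForms c, lo.lastRoot.eval v < y) ∧
      (∀ hi ∈ upperForms c, y < hi.lastRoot.eval v) := by
  simp only [basicSet, lowerForms, upperForms, Set.mem_ofPred_eq, List.forall_mem_map,
    List.forall_mem_filter, decide_eq_true_eq]
  constructor
  · intro h
    refine ⟨fun α hα h0 => (holds_snoc_iff_of_last_eq_zero h0 v y).1 (h α hα),
      fun α hα hlo => ?_, fun α hα hhi => ?_⟩
    · have := h α hα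
      rw [eq_lt_form_of_last_ne_zero hc hα hlo.ne] at this
      exact (α.form.eval_snoc_neg_iff_of_last_neg hlo v y).1 this
    · have := h α hα
      rw [eq_lt_form_of_last_ne_zero hc hα hhi.ne'] at this
      exact (α.form.eval_snoc_neg_iff_of_last_pos hhi v y).1 this
  · rintro ⟨h0, hlo, hhi⟩ α hα
    rcases lt_trichotomy α.form.last 0 with hneg | hzero | hpos
    · rw [eq_lt_form_of_last_ne_zero hc hα hneg.ne]
      exact (α.form.eval_snoc_neg_iff_of_last_neg hneg v y).2 (hlo α hα hneg)
    · exact (holds_snoc_iff_of_last_eq_zero hzero v y).2 (h0 α hα hzero)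
    · rw [eq_lt_form_of_last_ne_zero hc hα hpos.ne']
      exact (α.form.eval_snoc_neg_iff_of_last_pos hpos v y).2 (hhi α hα hpos)

lemma setOf_exists_snoc_mem_basicSet_eq_fourierMotzkin (hc : ∀ f, .eq f ∈ c → f.last = 0) :
    {v | ∃ y, Fin.snoc v y ∈ basicSet c} = basicSet (fourierMotzkin c) := by
  ext v
  simp only [Set.mem_ofPred_eq, snoc_mem_basicSet_iff hc, fourierMotzkin, basicSet_append,
    exists_and_left, Set.mem_inter_iff]
  refine and_congr_right fun _ => ?_
  have hbetween := Finset.exists_between' ((lowerForms c).map (·.lastRoot.eval v)).toFinset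
    ((upperForms c).map (·.lastRoot.eval v)).toFinset
  simp only [List.mem_toFinset, List.forall_mem_map] at hbetween
  have hcross : v ∈ basicSet ((lowerForms c ×ˢ upperForms c).map fun p => .lt (elimLast p.1 p.2))
      ↔ ∀ lo ∈ lowerForms c, ∀ hi ∈ upperForms c, lo.lastRoot.eval v < hi.lastRoot.eval v := by
    simp only [basicSet, Set.mem_ofPred_eq, List.forall_mem_map, Atom.Holds]
    have hiff {lo hi} (hlo : lo ∈ lowerForms c) (hhi : hi ∈ upperForms c) :=
      elimLast_neg_iff (last_neg_of_mem_lowerForms hlo) (last_pos_of_mem_upperForms hhi) v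
    exact ⟨fun h lo hlo hi hhi => (hiff hlo hhi).1 (h (lo, hi) (List.mem_product.2 ⟨hlo, hhi⟩)),
      fun h p hp => (hiff (List.mem_product.1 hp).1 (List.mem_product.1 hp).2).2
        (h _ (List.mem_product.1 hp).1 _ (List.mem_product.1 hp).2)⟩
  rw [hcross]
  exact ⟨fun ⟨y, hlo, hhi⟩ lo hl hi hh => (hlo lo hl).trans (hhi hi hh), hbetween⟩

end Projection

namespace IsRatSemilinear

variable {n : ℕ}

lemma exists_snoc {s : Set (Fin (n + 1) → ℝ)} (hs : IsRatSemilinear s) :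
    IsRatSemilinear {v | ∃ y, Fin.snoc v y ∈ s} := by
  induction hs with
  | empty => simpa using empty
  | union _ _ ih₁ ih₂ =>
    convert ih₁.union ih₂ using 1
    ext
    simp [exists_or]
  | basic c =>
    by_cases h : ∃ f, .eq f ∈ c ∧ f.last ≠ 0
    · obtain ⟨f, hfc, hf⟩ := h
      rw [setOf_exists_snoc_mem_basicSet_eq_substLastRoot hfc hf]
      exact basic _
    · simp only [not_exists, not_and, not_not] at h
      rw [setOf_exists_snoc_mem_basicSet_eq_fourierMotzkin h]
      exact basic _

end IsRatSemilinear

lemma exists_affForm_realize_term {α : Type*} {N : ℕ} (t : ordAddLang.Term α) (e : α → Fin N) :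
    ∃ a : AffForm N, ∀ w : Fin N → ℝ, t.realize (w ∘ e) = a.eval w := by
  induction t with
  | var x => exact ⟨(Pi.single (e x) 1, 0), fun w => (AffForm.eval_single _ w).symm⟩
  | func F ts ih =>
    cases F with
    | zero => exact ⟨(0, 0), fun w => by rw [AffForm.eval_const, Rat.cast_zero]; rfl⟩
    | one => exact ⟨(0, 1), fun w => by rw [AffForm.eval_const, Rat.cast_one]; rfl⟩
    | add =>
      obtain ⟨a₀, h₀⟩ := ih 0
      obtain ⟨a₁, h₁⟩ := ih 1
      exact ⟨a₀ + a₁, fun w => by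
        rw [AffForm.eval_add, ← h₀, ← h₁]
        rfl⟩

theorem isRatSemilinear_setOf_realize {m : ℕ} :
    ∀ {k : ℕ} (φ : ordAddLang.BoundedFormula (Fin m) k),
      IsRatSemilinear {w : Fin (m + k) → ℝ | φ.Realize (w ∘ Fin.castAdd k) (w ∘ Fin.natAdd m)}
  | _, .falsum => by simpa [Language.BoundedFormula.Realize] using IsRatSemilinear.empty
  | _, .equal t₁ t₂ => by
    obtain ⟨a₁, h₁⟩ := exists_affForm_realize_term t₁ (Sum.elim (Fin.castAdd _) (Fin.natAdd m))
    obtain ⟨a₂, h₂⟩ := exists_affForm_realize_term t₂ (Sum.elim (Fin.castAdd _) (Fin.natAdd m))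
    convert IsRatSemilinear.setOf_holds (.eq (a₁ - a₂)) using 2 with w
    simp [Language.BoundedFormula.Realize, Atom.Holds, ← Sum.comp_elim, h₁, h₂, sub_eq_zero]
  | _, .rel R ts => by
    cases R
    obtain ⟨a₀, h₀⟩ := exists_affForm_realize_term (ts 0) (Sum.elim (Fin.castAdd _) (Fin.natAdd m))
    obtain ⟨a₁, h₁⟩ := exists_affForm_realize_term (ts 1) (Sum.elim (Fin.castAdd _) (Fin.natAdd m))
    convert IsRatSemilinear.setOf_holds (.lt (a₀ - a₁)) using 1
    ext w
    change (Language.Term.realize _ (ts 0) : ℝ) < Language.Term.realize _ (ts 1) ↔ _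
    simp [Atom.Holds, ← Sum.comp_elim, h₀, h₁]
  | _, .imp φ ψ => by
    convert (isRatSemilinear_setOf_realize φ).compl.union (isRatSemilinear_setOf_realize ψ) using 1
    ext
    simp [imp_iff_not_or]
  | k, .all φ => by
    have hset : {w : Fin (m + k) → ℝ | φ.all.Realize (w ∘ Fin.castAdd k) (w ∘ Fin.natAdd m)} =
        {v | ∃ y, Fin.snoc v y ∈ {w : Fin (m + k + 1) → ℝ |
          φ.Realize (w ∘ Fin.castAdd (k + 1)) (w ∘ Fin.natAdd m)}ᶜ}ᶜ := by
      ext w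
      simp [Language.BoundedFormula.realize_all]
    rw [hset]
    exact (isRatSemilinear_setOf_realize φ).compl.exists_snoc.compl

theorem Set.Definable.isRatSemilinear {m : ℕ} {s : Set (Fin m → ℝ)}
    (h : (∅ : Set ℝ).Definable ordAddLang s) : IsRatSemilinear s := by
  obtain ⟨φ, rfl⟩ := Set.empty_definable_iff.1 h
  have hset : Set.ofPred φ.Realize = {w : Fin m → ℝ |
      Language.BoundedFormula.Realize φ (w ∘ Fin.castAdd 0) (w ∘ Fin.natAdd m)} := by
    ext w
    simp only [Set.mem_ofPred_eq, Language.Formula.Realize]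
    exact iff_of_eq (congrArg _ (Subsingleton.elim _ _))
  rw [hset]
  exact isRatSemilinear_setOf_realize φ

namespace AffForm

variable {n : ℕ}

lemma cmp_eval_snoc_of_last_pos (a : AffForm (n + 1)) (h : 0 < a.last) (v : Fin n → ℝ) (y : ℝ) :
    cmp (a.eval (Fin.snoc v y)) 0 = cmp y (a.lastRoot.eval v) := by
  have hmono : StrictMono fun t => a.eval (Fin.snoc v t) := fun s t hst => by
    simp only [eval_snoc]
    gcongr
  have := hmono.cmp_map_eq y (a.lastRoot.eval v)
  rwa [(a.eval_snoc_eq_zero_iff h.ne' v _).2 rfl] at this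

lemma cmp_eval_snoc_of_last_neg (a : AffForm (n + 1)) (h : a.last < 0) (v : Fin n → ℝ) (y : ℝ) :
    cmp (a.eval (Fin.snoc v y)) 0 = cmp (a.lastRoot.eval v) y := by
  have hanti : StrictAnti fun t => a.eval (Fin.snoc v t) := fun s t hst => by
    simp only [eval_snoc]
    have : (a.last : ℝ) < 0 := by exact_mod_cast h
    nlinarith
  have := hanti.cmp_map_eq y (a.lastRoot.eval v)
  rwa [(a.eval_snoc_eq_zero_iff h.ne v _).2 rfl] at this

end AffForm

def SameCell (S : Finset ℚ) (x z : ℝ) : Prop := ∀ a ∈ S, cmp x (a : ℝ) = cmp z a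

lemma SameCell.mono {S T : Finset ℚ} (hST : S ⊆ T) {x z : ℝ} (h : SameCell T x z) :
    SameCell S x z :=
  fun a ha => h a (hST ha)

lemma AffForm.cmp_eval_eq_of_sameCell {S : Finset ℚ} {g : AffForm 1}
    (hS : g.lastRoot.2 ∈ S) {x z : ℝ} (h : SameCell S x z) :
    cmp (g.eval fun _ => x) 0 = cmp (g.eval fun _ => z) 0 := by
  have hroot : g.lastRoot.eval Fin.elim0 = g.lastRoot.2 := by simp [eval]
  rcases lt_trichotomy g.last 0 with hneg | hzero | hpos
  · rw [← Fin.snoc_zero Fin.elim0 x, ← Fin.snoc_zero Fin.elim0 z,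
      g.cmp_eval_snoc_of_last_neg hneg, g.cmp_eval_snoc_of_last_neg hneg, hroot,
      ← cmp_swap, h _ hS, cmp_swap]
  · rw [← Fin.snoc_zero Fin.elim0 x, ← Fin.snoc_zero Fin.elim0 z, eval_snoc, eval_snoc, hzero]
    simp
  · rw [← Fin.snoc_zero Fin.elim0 x, ← Fin.snoc_zero Fin.elim0 z,
      g.cmp_eval_snoc_of_last_pos hpos, g.cmp_eval_snoc_of_last_pos hpos, hroot, h _ hS]

lemma isOpen_setOf_snoc_mem_basicSet {n : ℕ} {c : List (Atom (n + 1))}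
    (hc : ∀ f, .eq f ∈ c → f.last = 0) (v : Fin n → ℝ) :
    IsOpen {y | Fin.snoc v y ∈ basicSet c} := by
  induction c with
  | nil => simp
  | cons α c ih =>
    rw [basicSet_cons]
    change IsOpen ({y | α.Holds (Fin.snoc v y)} ∩ {y | Fin.snoc v y ∈ basicSet c})
    refine IsOpen.inter ?_ (ih fun f hf => hc f (List.mem_cons_of_mem _ hf))
    cases α with
    | eq f =>
      simp only [Atom.Holds, AffForm.eval_snoc, hc f List.mem_cons_self, Rat.cast_zero, zero_mul,
        add_zero]
      exact isOpen_const
    | lt f =>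
      simp only [Atom.Holds, AffForm.eval_snoc]
      exact isOpen_lt (continuous_const.add (continuous_const.mul continuous_id)) continuous_const

open Topology in
lemma exists_ne_mem_of_isOpen {U : Set ℝ} (hU : IsOpen U) {y : ℝ} (hy : y ∈ U) :
    ∃ y' ∈ U, y' ≠ y :=
  ((eventually_nhdsWithin_of_eventually_nhds (hU.mem_nhds hy)).and
    (self_mem_nhdsWithin : {y}ᶜ ∈ 𝓝[≠] y)).exists

lemma exists_locally_affine_basicSet (c : List (Atom 2)) :
    ∃ S : Finset ℚ, ∀ x y, Fin.snoc (fun _ => x) y ∈ basicSet c →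
      (∃ y' ≠ y, Fin.snoc (fun _ => x) y' ∈ basicSet c) ∨
      ∃ g : AffForm 1, y = g.eval (fun _ => x) ∧
        ∀ z, SameCell S x z → Fin.snoc (fun _ => z) (g.eval fun _ => z) ∈ basicSet c := by
  by_cases h : ∃ f, .eq f ∈ c ∧ f.last ≠ 0
  · obtain ⟨f, hfc, hf⟩ := h
    refine ⟨((substLastRoot f c).map (·.form.lastRoot.2)).toFinset, fun x y hxy => Or.inr
      ⟨f.lastRoot, eq_lastRoot_of_snoc_mem_basicSet hfc hf hxy, fun z hz => ?_⟩⟩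
    rw [eq_lastRoot_of_snoc_mem_basicSet hfc hf hxy, snoc_lastRoot_mem_basicSet_iff hf] at hxy
    rw [snoc_lastRoot_mem_basicSet_iff hf]
    intro α hα
    refine (α.holds_iff_of_cmp_eq (AffForm.cmp_eval_eq_of_sameCell ?_ hz)).1 (hxy α hα)
    exact List.mem_toFinset.2 (List.mem_map_of_mem hα)
  · simp only [not_exists, not_and, not_not] at h
    refine ⟨∅, fun x y hxy => Or.inl ?_⟩
    obtain ⟨y', hy', hne⟩ := exists_ne_mem_of_isOpen (isOpen_setOf_snoc_mem_basicSet h _) hxy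
    exact ⟨y', hne, hy'⟩

lemma IsRatSemilinear.exists_locally_affine {s : Set (Fin 2 → ℝ)} (hs : IsRatSemilinear s) :
    ∃ S : Finset ℚ, ∀ x y, Fin.snoc (fun _ => x) y ∈ s →
      (∃ y' ≠ y, Fin.snoc (fun _ => x) y' ∈ s) ∨
      ∃ g : AffForm 1, y = g.eval (fun _ => x) ∧
        ∀ z, SameCell S x z → Fin.snoc (fun _ => z) (g.eval fun _ => z) ∈ s := by
  induction hs with
  | empty => exact ⟨∅, fun x y h => h.elim⟩
  | basic c => exact exists_locally_affine_basicSet c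
  | @union s t _ _ ihs iht =>
    obtain ⟨S, hS⟩ := ihs
    obtain ⟨T, hT⟩ := iht
    refine ⟨S ∪ T, fun x y hxy => ?_⟩
    rcases hxy with hxy | hxy
    · rcases hS x y hxy with ⟨y', hne, hy'⟩ | ⟨g, hg, hcell⟩
      · exact Or.inl ⟨y', hne, Or.inl hy'⟩
      · exact Or.inr ⟨g, hg, fun z hz => Or.inl (hcell z (hz.mono Finset.subset_union_left))⟩
    · rcases hT x y hxy with ⟨y', hne, hy'⟩ | ⟨g, hg, hcell⟩
      · exact Or.inl ⟨y', hne, Or.inr hy'⟩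
      · exact Or.inr ⟨g, hg, fun z hz => Or.inr (hcell z (hz.mono Finset.subset_union_right))⟩

namespace SameCell

variable {S : Finset ℚ} {x z : ℝ}

lemma refl (S : Finset ℚ) (x : ℝ) : SameCell S x x := fun _ _ => rfl

lemma lt_iff (h : SameCell S x z) {a : ℚ} (ha : a ∈ S) : (a : ℝ) < x ↔ (a : ℝ) < z := by
  rw [← cmp_eq_gt_iff, h a ha, cmp_eq_gt_iff]

lemma of_forall_lt (hx : ∀ b ∈ S, (b : ℝ) < x) (hz : ∀ b ∈ S, (b : ℝ) < z) : SameCell S x z :=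
  fun b hb => by rw [(cmp_eq_gt_iff _ _).2 (hx b hb), (cmp_eq_gt_iff _ _).2 (hz b hb)]

lemma insert_of_lt (h : SameCell S x z) {a : ℚ} (hx : x < a) (hz : z < a) :
    SameCell (insert a S) x z :=
  Finset.forall_mem_insert _ _ _ |>.2
    ⟨by rw [(cmp_eq_lt_iff _ _).2 hx, (cmp_eq_lt_iff _ _).2 hz], h⟩

end SameCell

def IsPiecewiseRatAffine (S : Finset ℚ) (f : ℝ → ℝ) : Prop :=
  ∀ x, ∃ α β : ℚ, ∀ z, SameCell S x z → f z = α * z + β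

lemma isPiecewiseRatAffine_of_isRatSemilinear_graph {f : ℝ → ℝ}
    (hf : IsRatSemilinear {v : Fin 2 → ℝ | f (v 0) = v 1}) :
    ∃ S, IsPiecewiseRatAffine S f := by
  obtain ⟨S, hS⟩ := hf.exists_locally_affine
  have hmem (x y : ℝ) : Fin.snoc (fun _ => x) y ∈ {v : Fin 2 → ℝ | f (v 0) = v 1} ↔ f x = y :=
    Iff.rfl
  refine ⟨S, fun x => ?_⟩
  rcases hS x (f x) ((hmem x _).2 rfl) with ⟨y', hne, hy'⟩ | ⟨g, -, hcell⟩
  · exact absurd ((hmem x y').1 hy').symm hne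
  · exact ⟨g.1 0, g.2, fun z hz => ((hmem z _).1 (hcell z hz)).trans (by simp [AffForm.eval])⟩

namespace ReLUHClosure

lemma affine (α β : ℚ) : ReLUHClosure fun x => α * x + β :=
  (smul α id).add (const β)

lemma relu_sub_const (a : ℚ) : ReLUHClosure fun x => max (x - a) 0 := by
  convert (affine 1 (-a)).relu using 3
  push_cast
  ring

lemma heaviside_sub_const (a : ℚ) : ReLUHClosure fun x => if (a : ℝ) ≤ x then 1 else 0 := by
  convert (affine 1 (-a)).heaviside using 3
  push_cast
  rw [← sub_eq_add_neg, one_mul, sub_nonneg]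

lemma heaviside_const_sub (a : ℚ) : ReLUHClosure fun x => if x ≤ (a : ℝ) then 1 else 0 := by
  convert (affine (-1) a).heaviside using 3
  push_cast
  rw [neg_one_mul, neg_add_eq_sub, sub_nonneg]

/-- The decomposition `h = α • ReLU(x - a) + γ • H(x - a) - δ • (1 - H(a - x))`, where
`1 - H(a - x)` is the indicator of `x > a`. -/
lemma of_eq_zero_of_lt {h : ℝ → ℝ} {a α β γ : ℚ} (hlt : ∀ x < (a : ℝ), h x = 0)
    (hgt : ∀ x > (a : ℝ), h x = α * x + β) (ha : h a = γ) : ReLUHClosure h := by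
  set δ : ℚ := γ - α * a - β
  convert ((smul α (relu_sub_const a)).add (smul γ (heaviside_sub_const a))).add
    (smul δ ((heaviside_const_sub a).add (const (-1)))) using 1
  funext x
  rcases lt_trichotomy x a with hx | rfl | hx
  · simp [hlt x hx, hx.le, hx.not_ge]
  · simp [ha, δ]
  · simp only [hgt x hx, δ, sub_nonneg, hx.le, hx.not_ge, max_eq_left, if_true, if_false]
    push_cast
    ring

end ReLUHClosure

lemma IsPiecewiseRatAffine.ite_lt {S : Finset ℚ} {a : ℚ} (hS : ∀ b ∈ S, b < a) {f : ℝ → ℝ}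
    (hf : IsPiecewiseRatAffine (insert a S) f) {α₀ β₀ : ℚ}
    (hleft : ∀ z, (∀ b ∈ S, (b : ℝ) < z) → z < a → f z = α₀ * z + β₀) :
    IsPiecewiseRatAffine S fun z => if z < a then f z else α₀ * z + β₀ := by
  intro x
  by_cases hx : ∀ b ∈ S, (b : ℝ) < x
  · refine ⟨α₀, β₀, fun z hz => ?_⟩
    by_cases hza : z < a
    · simp only [if_pos hza]
      exact hleft z (fun b hb => (hz.lt_iff hb).1 (hx b hb)) hza
    · simp only [if_neg hza]
  · simp only [not_forall, not_lt] at hx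
    obtain ⟨b, hb, hxb⟩ := hx
    obtain ⟨α, β, h⟩ := hf x
    refine ⟨α, β, fun z hz => ?_⟩
    have hba : (b : ℝ) < a := Rat.cast_lt.2 (hS b hb)
    have hzb : z ≤ b := not_lt.1 fun hbz => (not_lt.2 hxb) ((hz.lt_iff hb).2 hbz)
    have hza : z < a := hzb.trans_lt hba
    simp only [if_pos hza]
    exact h z (hz.insert_of_lt (hxb.trans_lt hba) hza)

/-- Induction on the breakpoints from the largest one `a` down: `g`, which follows `f` left of `a`
and continues its last affine piece to the right, has one breakpoint fewer, and `f - g` vanishes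
left of `a`. -/
theorem IsPiecewiseRatAffine.reluHClosure {S : Finset ℚ} {f : ℝ → ℝ}
    (hf : IsPiecewiseRatAffine S f) : ReLUHClosure f := by
  induction S using Finset.induction_on_max generalizing f with
  | empty =>
    obtain ⟨α, β, h⟩ := hf 0
    convert ReLUHClosure.affine α β using 1
    exact funext fun z => h z fun _ ha => absurd ha (Finset.notMem_empty _)
  | insert a S hS ih =>
    have hSa (b : ℚ) (hb : b ∈ S) : (b : ℝ) < a := Rat.cast_lt.2 (hS b hb)
    obtain ⟨x₀, hx₀S, hx₀a⟩ : ∃ x₀ : ℝ, (∀ b ∈ S, (b : ℝ) < x₀) ∧ x₀ < a := by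
      simpa using Finset.exists_between' (S.image ((↑) : ℚ → ℝ)) {(a : ℝ)} (by simpa using hSa)
    obtain ⟨α₀, β₀, h₀⟩ := hf x₀
    obtain ⟨α₁, β₁, h₁⟩ := hf (a + 1)
    obtain ⟨αa, βa, ha⟩ := hf a
    have hright (z : ℝ) (haz : (a : ℝ) < z) : f z = α₁ * z + β₁ := by
      refine h₁ z (SameCell.of_forall_lt (fun b hb => ?_) (fun b hb => ?_)) <;>
        rcases Finset.mem_insert.1 hb with rfl | hb
      exacts [by linarith, by linarith [hSa b hb], haz, (hSa b hb).trans haz]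
    set g : ℝ → ℝ := fun z => if z < a then f z else α₀ * z + β₀
    have hg : IsPiecewiseRatAffine S g := hf.ite_lt hS fun z hSz hza =>
      h₀ z ((SameCell.of_forall_lt hx₀S hSz).insert_of_lt hx₀a hza)
    have hfg : ReLUHClosure fun z => f z - g z := by
      refine ReLUHClosure.of_eq_zero_of_lt (a := a) (α := α₁ - α₀) (β := β₁ - β₀)
        (γ := αa * a + βa - α₀ * a - β₀) (fun z hz => ?_) (fun z hz => ?_) ?_
      · simp [g, hz]
      · simp only [g, if_neg (not_lt.2 hz.le), hright z hz]
        push_cast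
        ring
      · simp only [g, lt_irrefl, if_false, ha a (SameCell.refl _ _)]
        push_cast
        ring
    convert (ih hg).add hfg using 1
    funext z
    ring

/-- Every unary semilinear function is expressible from rational affine functions,
`ReLU`, and the Heaviside step function. -/
theorem unary_semilinear_mem_reluH_closure (f : ℝ → ℝ)
    (hf : Semilinear (n := 1) (fun v => f (v 0))) : ReLUHClosure f := by
  obtain ⟨S, hS⟩ := isPiecewiseRatAffine_of_isRatSemilinear_graph hf.isRatSemilinear
  exact hS.reluHClosure
end

section
/- Let f : ℝ × ℝ → ℝ^d be a function built by finitely many compositions of affine maps with rational coefficients and coordinate-wise applications of ReLU and the Heaviside function H. Then f is eventually linear in its first argument with slope independent of the second argument: there exist a vector a ∈ ℝ^d and, for each y ∈ ℝ, a threshold S_y ∈ ℝ and vector b_y ∈ ℝ^d such that f(x, y) = a·x + b_y for all x ≥ S_y. -/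
/-!
Along `x → ∞` an affine function `a * x + b` eventually has the sign of `a` (or is constant when
`a = 0`), so `ReLU` turns it into an affine function of slope `max a 0` and `H` into a constant.
Affine maps preserve eventual affinity, with the new slope computed from the old slope alone.
Hence, by induction on the network, every coordinate of `f (·, y)` is eventually affine with a
slope that never depends on `y`.
-/

/-- The class `FFN(ReLU, H)` of functions `ℝ × ℝ → ℝ^d`: built from the two inputs by
finitely many compositions of affine maps with rational coefficients and coordinate-wise
applications of `ReLU` and the Heaviside function `H`. -/
inductive FFNReLUH2 : {d : ℕ} → (ℝ → ℝ → (Fin d → ℝ)) → Prop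
  | input : FFNReLUH2 (d := 2) (fun x y => ![x, y])
  | affine {d e : ℕ} (A : Fin e → Fin d → ℚ) (b : Fin e → ℚ) {f : ℝ → ℝ → (Fin d → ℝ)} :
      FFNReLUH2 f →
      FFNReLUH2 (d := e) (fun x y i => (∑ j, (A i j : ℝ) * f x y j) + (b i : ℝ))
  | relu {d : ℕ} {f : ℝ → ℝ → (Fin d → ℝ)} :
      FFNReLUH2 f → FFNReLUH2 (fun x y i => max (f x y i) 0)
  | heaviside {d : ℕ} {f : ℝ → ℝ → (Fin d → ℝ)} :
      FFNReLUH2 f → FFNReLUH2 (fun x y i => if 0 ≤ f x y i then (1 : ℝ) else 0)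

open Filter

section Scalar

variable {a : ℝ}

lemma eventually_pos_affine (ha : 0 < a) (b : ℝ) : ∀ᶠ x in atTop, 0 < a * x + b :=
  (tendsto_atTop_add_const_right _ b (tendsto_id.const_mul_atTop ha)).eventually_gt_atTop 0

lemma eventually_neg_affine (ha : a < 0) (b : ℝ) : ∀ᶠ x in atTop, a * x + b < 0 :=
  (tendsto_atBot_add_const_right _ b (tendsto_id.const_mul_atTop_of_neg ha)).eventually_lt_atBot 0

lemma exists_eventually_max_affine_zero_eq (a b : ℝ) :
    ∃ c, ∀ᶠ x in atTop, max (a * x + b) 0 = max a 0 * x + c := by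
  rcases lt_trichotomy a 0 with ha | rfl | ha
  · refine ⟨0, (eventually_neg_affine ha b).mono fun x hx => ?_⟩
    rw [max_eq_right hx.le, max_eq_right ha.le]
    ring
  · exact ⟨max b 0, by simp⟩
  · refine ⟨b, (eventually_pos_affine ha b).mono fun x hx => ?_⟩
    rw [max_eq_left hx.le, max_eq_left ha.le]

lemma exists_eventually_heaviside_affine_eq (a b : ℝ) :
    ∃ c, ∀ᶠ x in atTop, (if 0 ≤ a * x + b then (1 : ℝ) else 0) = c := by
  rcases lt_trichotomy a 0 with ha | rfl | ha
  · exact ⟨0, (eventually_neg_affine ha b).mono fun x hx => if_neg hx.not_ge⟩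
  · exact ⟨if 0 ≤ b then 1 else 0, by simp⟩
  · exact ⟨1, (eventually_pos_affine ha b).mono fun x hx => if_pos hx.le⟩

end Scalar

def EventuallyLinearInFirstArg {d : ℕ} (a : Fin d → ℝ) (f : ℝ → ℝ → Fin d → ℝ) : Prop :=
  ∀ y, ∃ b : Fin d → ℝ, ∀ᶠ x in atTop, ∀ i, f x y i = a i * x + b i

namespace EventuallyLinearInFirstArg

variable {d : ℕ} {a : Fin d → ℝ} {f : ℝ → ℝ → Fin d → ℝ}

lemma of_forall_coord (h : ∀ y i, ∃ c, ∀ᶠ x in atTop, f x y i = a i * x + c) :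
    EventuallyLinearInFirstArg a f := fun y => by
  choose b hb using h y
  exact ⟨b, eventually_all.2 hb⟩

lemma input : EventuallyLinearInFirstArg ![1, 0] fun x y => ![x, y] := fun y =>
  ⟨![0, y], Eventually.of_forall fun x i => by fin_cases i <;> simp⟩

lemma affine {e : ℕ} (A : Fin e → Fin d → ℝ) (c : Fin e → ℝ) (hf : EventuallyLinearInFirstArg a f) :
    EventuallyLinearInFirstArg (fun i => ∑ j, A i j * a j)
      fun x y i => (∑ j, A i j * f x y j) + c i := fun y => by
  obtain ⟨b, hb⟩ := hf y
  refine ⟨fun i => (∑ j, A i j * b j) + c i, hb.mono fun x hx i => ?_⟩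
  simp only [hx, mul_add, Finset.sum_add_distrib, Finset.sum_mul, mul_assoc]
  ring

lemma relu (hf : EventuallyLinearInFirstArg a f) :
    EventuallyLinearInFirstArg (fun i => max (a i) 0) fun x y i => max (f x y i) 0 :=
  of_forall_coord fun y i => by
    obtain ⟨b, hb⟩ := hf y
    obtain ⟨c, hc⟩ := exists_eventually_max_affine_zero_eq (a i) (b i)
    exact ⟨c, (hb.and hc).mono fun x hx => by rw [hx.1 i, hx.2]⟩

lemma heaviside (hf : EventuallyLinearInFirstArg a f) :
    EventuallyLinearInFirstArg 0 fun x y i => if 0 ≤ f x y i then (1 : ℝ) else 0 :=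
  of_forall_coord fun y i => by
    obtain ⟨b, hb⟩ := hf y
    obtain ⟨c, hc⟩ := exists_eventually_heaviside_affine_eq (a i) (b i)
    exact ⟨c, (hb.and hc).mono fun x hx => by simp [hx.1 i, hx.2]⟩

end EventuallyLinearInFirstArg

lemma FFNReLUH2.exists_eventuallyLinearInFirstArg {d : ℕ} {f : ℝ → ℝ → Fin d → ℝ}
    (hf : FFNReLUH2 f) : ∃ a, EventuallyLinearInFirstArg a f := by
  induction hf with
  | input => exact ⟨_, .input⟩
  | affine A c _ ih =>
    obtain ⟨a, ha⟩ := ih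
    exact ⟨_, ha.affine (fun i j => A i j) fun i => c i⟩
  | relu _ ih =>
    obtain ⟨a, ha⟩ := ih
    exact ⟨_, ha.relu⟩
  | heaviside _ ih =>
    obtain ⟨a, ha⟩ := ih
    exact ⟨_, ha.heaviside⟩

/-- Any `FFN(ReLU, H)` function `f : ℝ × ℝ → ℝ^d` is eventually linear in its first
argument, with a slope `a` independent of the second argument: for each `y` there are a
threshold `S_y` and an offset `b_y` with `f (x, y) = a • x + b_y` for all `x ≥ S_y`. -/
theorem ffnReLUH_eventually_linear_in_first_arg {d : ℕ} (f : ℝ → ℝ → (Fin d → ℝ))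
    (hf : FFNReLUH2 f) :
    ∃ a : Fin d → ℝ, ∀ y : ℝ, ∃ S : ℝ, ∃ b : Fin d → ℝ,
      ∀ x : ℝ, S ≤ x → ∀ i, f x y i = a i * x + b i := by
  obtain ⟨a, ha⟩ := hf.exists_eventuallyLinearInFirstArg
  refine ⟨a, fun y => ?_⟩
  obtain ⟨b, hb⟩ := ha y
  obtain ⟨S, hS⟩ := eventually_atTop.1 hb
  exact ⟨S, b, hS⟩
end

section
/- For every k, d ≥ 1 there is a finite group Γ with a generating set Δ of size d such that (1) every δ ∈ Δ satisfies δ = δ⁻¹, and (2) for every ℓ ≥ 1 and δ₁,...,δ_ℓ ∈ Δ with δᵢ ≠ δᵢ₊₁ for all i, if δ₁⋯δ_ℓ = 1 then ℓ ≥ k. -/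
/-- `Δ` is a generating set of size `d` for the finite group `Γ` consisting of
involutions, such that any product of fewer than `k` generators in which no two
consecutive factors are equal is nontrivial. -/
def IsHighGirthGenSet (Γ : Type) [Group Γ] (Δ : Finset Γ) (k d : ℕ) : Prop :=
  Δ.card = d ∧
  Subgroup.closure (Δ : Set Γ) = ⊤ ∧
  (∀ δ ∈ Δ, δ = δ⁻¹) ∧
  (∀ l : List Γ, l ≠ [] → (∀ x ∈ l, x ∈ Δ) → l.Chain' (· ≠ ·) →
    l.prod = 1 → k ≤ l.length)

/-!
Take for `Γ` the group generated by the colour involutions `δᵢ` of the ball of radius `k` in the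
`d`-regular tree whose edges are coloured by `Fin d`. Its vertices are the reduced words of length
at most `k`, the root being the empty word, and the edge of colour `i` joins `w` to `i :: w`.
A nonempty reduced word `i₁ ⋯ i_ℓ` with `ℓ < k` then moves the root to the vertex `i₁ ⋯ i_ℓ`,
so `δ_{i₁} ⋯ δ_{i_ℓ} ≠ 1`.
-/

theorem isHighGirthGenSet_closure_range {G ι : Type} [Group G] [Fintype ι] {k : ℕ} {s : ι → G}
    (hs : Function.Injective s) (hinv : ∀ i, (s i)⁻¹ = s i)
    (hred : ∀ w : List ι, w ≠ [] → w.IsChain (· ≠ ·) → (w.map s).prod = 1 → k ≤ w.length) :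
    ∃ Δ, IsHighGirthGenSet (Subgroup.closure (Set.range s)) Δ k (Fintype.card ι) := by
  set H := Subgroup.closure (Set.range s)
  let e : ι → H := fun i => ⟨s i, Subgroup.subset_closure (Set.mem_range_self i)⟩
  have he : Function.Injective e := fun i j h => hs (congrArg Subtype.val h)
  have hrange : Set.range e = Subtype.val ⁻¹' Set.range s := by
    ext ⟨x, hx⟩
    simp [e]
  have hmem : ∀ x, x ∈ Finset.univ.map ⟨e, he⟩ ↔ x ∈ Set.range e := by simp
  refine ⟨Finset.univ.map ⟨e, he⟩, by simp, ?_, ?_, ?_⟩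
  · rw [Finset.coe_map, Finset.coe_univ, Set.image_univ, Function.Embedding.coeFn_mk, hrange]
    exact Subgroup.closure_closure_coe_preimage
  · intro δ hδ
    obtain ⟨i, rfl⟩ := (hmem δ).1 hδ
    exact Subtype.ext (hinv i).symm
  · intro l hne hl hchain hprod
    obtain ⟨w, rfl⟩ : l ∈ Set.range (List.map e) := by
      rw [Set.range_list_map]
      exact fun x hx => (hmem x).1 (hl x hx)
    rw [List.length_map]
    refine hred w (by simpa using hne) ?_ ?_
    · exact (List.isChain_map e).1 hchain |>.imp fun _ _ h => mt (congrArg e) h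
    · simpa [Function.comp_def, e] using congrArg Subtype.val hprod

namespace TreeBall

variable {α : Type} {n : ℕ}

def reducedBall (α : Type) (n : ℕ) : Set (List α) :=
  {w | w.IsChain (· ≠ ·) ∧ w.length ≤ n}

instance [Finite α] : Finite (reducedBall α n) :=
  ((List.finite_length_le α n).subset fun _ hw => hw.2).to_subtype

def root : reducedBall α n := ⟨[], List.isChain_nil, Nat.zero_le n⟩

lemma tail_mem_reducedBall {w : List α} (hw : w ∈ reducedBall α n) : w.tail ∈ reducedBall α n :=
  ⟨hw.1.tail, le_trans (by simp) hw.2⟩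

variable [DecidableEq α]

def edgeSwap (n : ℕ) (i : α) (w : List α) : List α :=
  if w.head? = some i then w.tail else if w.length < n then i :: w else w

lemma edgeSwap_of_isChain_cons {i : α} {w : List α} (hw : (i :: w).IsChain (· ≠ ·))
    (hlen : w.length < n) : edgeSwap n i w = i :: w := by
  have hhead : w.head? ≠ some i := fun h => (List.isChain_cons.1 hw).1 i h rfl
  simp [edgeSwap, hhead, hlen]

lemma edgeSwap_mem (i : α) {w : List α} (hw : w ∈ reducedBall α n) :
    edgeSwap n i w ∈ reducedBall α n := by
  unfold edgeSwap
  split_ifs with hhead hlen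
  · exact tail_mem_reducedBall hw
  · refine ⟨List.isChain_cons.2 ⟨?_, hw.1⟩, hlen⟩
    rintro y hy rfl
    exact hhead hy
  · exact hw

lemma edgeSwap_edgeSwap (i : α) {w : List α} (hw : w ∈ reducedBall α n) :
    edgeSwap n i (edgeSwap n i w) = w := by
  by_cases hhead : w.head? = some i
  · obtain ⟨t, rfl⟩ := List.head?_eq_some_iff.1 hhead
    rw [show edgeSwap n i (i :: t) = t by simp [edgeSwap], edgeSwap_of_isChain_cons hw.1 hw.2]
  · by_cases hlen : w.length < n <;> simp [edgeSwap, hhead, hlen]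

noncomputable def ballSwap (n : ℕ) (i : α) : Equiv.Perm (reducedBall α n) :=
  Function.Involutive.toPerm (fun w => ⟨edgeSwap n i w, edgeSwap_mem i w.2⟩)
    fun w => Subtype.ext (edgeSwap_edgeSwap i w.2)

lemma ballSwap_inv (n : ℕ) (i : α) : (ballSwap n i)⁻¹ = ballSwap n i :=
  Function.Involutive.toPerm_symm _

lemma list_prod_map_ballSwap_root {w : List α} (hw : w ∈ reducedBall α n) :
    (w.map (ballSwap n)).prod root = ⟨w, hw⟩ := by
  induction w with
  | nil => rfl
  | cons i t ih =>
    simp only [List.map_cons, List.prod_cons, Equiv.Perm.coe_mul, Function.comp_apply,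
      ih (tail_mem_reducedBall hw)]
    exact Subtype.ext (edgeSwap_of_isChain_cons hw.1 hw.2)

lemma list_prod_map_ballSwap_ne_one {w : List α} (hw : w ∈ reducedBall α n) (hne : w ≠ []) :
    (w.map (ballSwap n)).prod ≠ 1 := fun h =>
  hne (congrArg Subtype.val ((list_prod_map_ballSwap_root hw).symm.trans (by rw [h])))

lemma ballSwap_injective (hn : 0 < n) : Function.Injective (ballSwap (α := α) n) := by
  intro i j h
  simpa [ballSwap, edgeSwap, root, hn] using congrArg (fun g => (g root).1) h

end TreeBall

open TreeBall in
theorem exists_finite_group_with_high_girth_generators_general (k d : ℕ)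
    (hk : 1 ≤ k) :
    ∃ (Γ : Type) (_ : Fintype Γ) (g : Group Γ) (Δ : Finset Γ),
      @IsHighGirthGenSet Γ g Δ k d := by
  obtain ⟨Δ, hΔ⟩ := isHighGirthGenSet_closure_range (ballSwap_injective (α := Fin d) hk)
    (ballSwap_inv k) fun w hne hw hprod => by
      by_contra! hlt
      exact list_prod_map_ballSwap_ne_one ⟨hw, hlt.le⟩ hne hprod
  exact ⟨_, Fintype.ofFinite _, inferInstance, Δ, by simpa using hΔ⟩

/-- For all `k, d ≥ 1` there is a finite group with a `d`-element generating set of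
involutions in which every product of fewer than `k` generators, no two consecutive
ones equal, is nontrivial. -/
theorem exists_finite_group_with_high_girth_generators (k d : ℕ)
    (hk : 1 ≤ k) (hd : 1 ≤ d) :
    ∃ (Γ : Type) (_ : Fintype Γ) (g : Group Γ) (Δ : Finset Γ),
      @IsHighGirthGenSet Γ g Δ k d :=
  exists_finite_group_with_high_girth_generators_general k d hk
end

section
/- Let G^u and H^v be pointed finite trees (acyclic connected graphs with a distinguished node and node labels). If u and v receive the same color after r rounds of color refinement (starting from the labeling-based initial coloring), then the subtrees induced by the vertices at distance at most r from u and from v, respectively, are isomorphic as pointed labeled graphs. -/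
/-- The type of color-refinement colors after `r` rounds, starting from colors in `L`. -/
def CRColor (L : Type) : ℕ → Type
  | 0 => L
  | r + 1 => CRColor L r × Multiset (CRColor L r)

/-- Color refinement: the color of a node after `r` rounds, starting from the initial
coloring `col`.  Each round pairs the previous color with the multiset of the previous
colors of the neighbors (pairing plays the role of an injective hash). -/
def crIter {V L : Type} [Fintype V] (G : SimpleGraph V) [DecidableRel G.Adj]
    (col : V → L) : (r : ℕ) → V → CRColor L r
  | 0 => col
  | r + 1 => fun v =>
      (crIter G col r v, (G.neighborFinset v).val.map (crIter G col r))

/-!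
In a tree, the ball of radius `r + 1` around `u` is `u` together with the branches hanging off
its neighbours, and the branch entered from `w` through its neighbour `y` is `y` together with
the branches hanging off the neighbours of `y` other than `w`. The color of `y` after `r + 1`
rounds records the multiset of round-`r` colors of its neighbours; removing the color of the
parent `w` leaves those of the children. Matching the children by color and gluing the
isomorphisms of their branches, obtained by induction on `r`, gives an isomorphism of branches,
and the same gluing at `u` gives the isomorphism of balls.
-/

section ColorRefinement

variable {V W L : Type} [Fintype V] [Fintype W] {G : SimpleGraph V} {H : SimpleGraph W}
  [DecidableRel G.Adj] [DecidableRel H.Adj] {labG : V → L} {labH : W → L} {r : ℕ}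
  {a : V} {b : W}

theorem crIter_eq_of_crIter_succ_eq (h : crIter G labG (r + 1) a = crIter H labH (r + 1) b) :
    crIter G labG r a = crIter H labH r b :=
  congrArg Prod.fst h

theorem map_neighborFinset_eq_of_crIter_succ_eq
    (h : crIter G labG (r + 1) a = crIter H labH (r + 1) b) :
    (G.neighborFinset a).val.map (crIter G labG r) =
      (H.neighborFinset b).val.map (crIter H labH r) :=
  congrArg Prod.snd h

theorem label_eq_of_crIter_eq (h : crIter G labG r a = crIter H labH r b) : labG a = labH b := by
  induction r with
  | zero => exact h
  | succ r ih => exact ih (crIter_eq_of_crIter_succ_eq h)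

end ColorRefinement

namespace SimpleGraph

variable {V : Type} {G : SimpleGraph V} {u w y y' z a b c : V}

theorem exists_adj_dist_eq_add_one (h : G.dist u z ≠ 0) :
    ∃ y, G.Adj u y ∧ G.dist u z = G.dist y z + 1 := by
  obtain ⟨p, hp⟩ := exists_walk_of_dist_ne_zero h
  cases p with
  | nil => simp at h
  | @cons _ y _ huy q =>
    refine ⟨y, huy, le_antisymm ?_ ?_⟩
    · obtain ⟨q', hq'⟩ := q.reachable.exists_walk_length_eq_dist
      simpa [hq'] using dist_le (Walk.cons huy q')
    · simpa [← hp] using dist_le q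

theorem IsTree.exists_isPath_cons (hG : G.IsTree) (hwy : G.Adj w y)
    (h : G.dist w z = G.dist y z + 1) : ∃ q : G.Walk y z, (Walk.cons hwy q).IsPath := by
  obtain ⟨q, hq⟩ := hG.connected.exists_walk_length_eq_dist y z
  exact ⟨q, Walk.isPath_of_length_eq_dist _ (by simp [hq, h])⟩

theorem IsTree.eq_of_adj_of_dist_eq_add_one (hG : G.IsTree) (hwy : G.Adj w y)
    (hwy' : G.Adj w y') (h : G.dist w z = G.dist y z + 1) (h' : G.dist w z = G.dist y' z + 1) :
    y = y' := by
  obtain ⟨q, hq⟩ := hG.exists_isPath_cons hwy h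
  obtain ⟨q', hq'⟩ := hG.exists_isPath_cons hwy' h'
  have := (hG.existsUnique_path w z).unique hq hq'
  simpa using congrArg Walk.snd this

theorem IsTree.dist_eq_add_one_of_adj_of_ne (hG : G.IsTree) (hwy : G.Adj w y)
    (hyc : G.Adj y c) (hcw : c ≠ w) (h : G.dist y z = G.dist c z + 1) :
    G.dist w z = G.dist y z + 1 := by
  rw [dist_comm (u := w), dist_comm (u := y)]
  refine (hG.dist_eq_dist_add_one_of_adj z hwy).resolve_right fun h' => hcw ?_
  rw [dist_comm, dist_comm (v := w)] at h'
  exact (hG.eq_of_adj_of_dist_eq_add_one hwy.symm hyc h' h).symm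

theorem IsTree.dist_eq_add_one_of_adj_of_dist_lt (hG : G.IsTree) (hwy : G.Adj w y)
    (ha : G.dist w a = G.dist y a + 1) (hab : G.Adj a b) (hlt : G.dist w a < G.dist w b) :
    G.dist w b = G.dist y b + 1 := by
  rw [dist_comm (u := w), dist_comm (u := y)]
  refine (hG.dist_eq_dist_add_one_of_adj b hwy).resolve_right fun h' => ?_
  have htri : G.dist y b ≤ G.dist y a + G.dist a b := hG.connected.dist_triangle
  rw [dist_eq_one_iff_adj.mpr hab] at htri
  rw [dist_comm (u := b), dist_comm (u := b)] at h'
  omega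

/-- The vertices within distance `r` of `y` that lie behind `y` as seen from `w`: for adjacent
`w` and `y` in a tree, `dist w z = dist y z + 1` says that the path from `w` to `z` runs
through `y`. -/
def branch (G : SimpleGraph V) (w y : V) (r : ℕ) : Set V :=
  {z | G.dist y z ≤ r ∧ G.dist w z = G.dist y z + 1}

variable {r : ℕ}

theorem mem_branch_self (hwy : G.Adj w y) : y ∈ G.branch w y r := by
  simp [branch, dist_eq_one_iff_adj.mpr hwy]

theorem notMem_branch_left : w ∉ G.branch w y r := by
  simp [branch]

theorem branch_zero (hG : G.Connected) (hwy : G.Adj w y) : G.branch w y 0 = {y} := by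
  ext z
  refine ⟨fun hz => ?_, ?_⟩
  · exact (hG.dist_eq_zero_iff.mp (Nat.le_zero.mp hz.1)).symm
  · rintro rfl
    exact mem_branch_self hwy

theorem setOf_dist_le_zero (hG : G.Connected) : {z | G.dist u z ≤ 0} = {u} := by
  ext z
  simp [hG.dist_eq_zero_iff, eq_comm]

theorem setOf_dist_le_succ (hG : G.Connected) [Fintype (G.neighborSet u)] :
    {z | G.dist u z ≤ r + 1} = insert u (⋃ y ∈ G.neighborFinset u, G.branch u y r) := by
  ext z
  simp only [branch, Set.mem_ofPred_eq, Set.mem_insert_iff, Set.mem_iUnion, mem_neighborFinset,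
    exists_prop]
  constructor
  · intro hz
    by_cases hzu : z = u
    · exact Or.inl hzu
    · obtain ⟨y, huy, hy⟩ :=
        exists_adj_dist_eq_add_one (hG.dist_eq_zero_iff.not.mpr (Ne.symm hzu))
      exact Or.inr ⟨y, huy, by omega, hy⟩
  · rintro (rfl | ⟨y, -, hyz, huz⟩)
    · simp
    · omega

theorem IsTree.branch_succ [DecidableEq V] [Fintype (G.neighborSet y)] (hG : G.IsTree)
    (hwy : G.Adj w y) :
    G.branch w y (r + 1) = insert y (⋃ c ∈ (G.neighborFinset y).erase w, G.branch y c r) := by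
  ext z
  simp only [branch, Set.mem_ofPred_eq, Set.mem_insert_iff, Set.mem_iUnion, Finset.mem_erase,
    mem_neighborFinset, exists_prop]
  constructor
  · rintro ⟨hzr, hz⟩
    by_cases hzy : z = y
    · exact Or.inl hzy
    · obtain ⟨c, hyc, hc⟩ :=
        exists_adj_dist_eq_add_one (hG.connected.dist_eq_zero_iff.not.mpr (Ne.symm hzy))
      have hcw : c ≠ w := by rintro rfl; omega
      exact Or.inr ⟨c, ⟨hcw, hyc⟩, by omega, hc⟩
  · rintro (rfl | ⟨c, ⟨hcw, hyc⟩, hcz, hyz⟩)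
    · exact mem_branch_self hwy
    · exact ⟨by omega, hG.dist_eq_add_one_of_adj_of_ne hwy hyc hcw hyz⟩

/-- `A` decomposes the subgraph induced on `insert y (⋃ c ∈ s, A c)` as the disjoint union of
the subgraphs induced on the `A c`, each attached to `y` by the single edge `y c`. -/
structure IsStarDecomp (G : SimpleGraph V) (y : V) (s : Set V) (A : V → Set V) : Prop where
  pairwiseDisjoint : s.PairwiseDisjoint A
  notMem : ∀ c ∈ s, y ∉ A c
  adj_iff : ∀ c ∈ s, ∀ a ∈ A c, G.Adj y a ↔ a = c
  not_adj : ∀ c ∈ s, ∀ c' ∈ s, c ≠ c' → ∀ a ∈ A c, ∀ b ∈ A c', ¬ G.Adj a b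

theorem IsTree.isStarDecomp_branch (hG : G.IsTree) {s : Set V} (hs : ∀ c ∈ s, G.Adj y c) :
    G.IsStarDecomp y s fun c => G.branch y c r where
  pairwiseDisjoint c hc c' hc' hne := Set.disjoint_left.mpr fun z hz hz' =>
    hne (hG.eq_of_adj_of_dist_eq_add_one (hs c hc) (hs c' hc') hz.2 hz'.2)
  notMem _ _ := notMem_branch_left
  adj_iff c hc a ha := by
    refine ⟨fun hya => ?_, fun h => h ▸ hs c hc⟩
    have h0 : G.dist c a = 0 := by have := ha.2; rw [dist_eq_one_iff_adj.mpr hya] at this; omega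
    exact (hG.connected.dist_eq_zero_iff.mp h0).symm
  not_adj c hc c' hc' hne a ha b hb hab := by
    rcases (hG.dist_eq_dist_add_one_of_adj y hab) with h | h
    · exact hne (hG.eq_of_adj_of_dist_eq_add_one (hs c hc) (hs c' hc') ha.2
        (hG.dist_eq_add_one_of_adj_of_dist_lt (hs c' hc') hb.2 hab.symm (by omega)))
    · exact hne (hG.eq_of_adj_of_dist_eq_add_one (hs c hc) (hs c' hc')
        (hG.dist_eq_add_one_of_adj_of_dist_lt (hs c hc) ha.2 hab (by omega)) hb.2)

end SimpleGraph

theorem Multiset.Rel.exists_bijOn {α β : Type*} [Nonempty β] {R : α → β → Prop}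
    {s : Multiset α} {t : Multiset β} (h : Multiset.Rel R s t) (hs : s.Nodup) (ht : t.Nodup) :
    ∃ e : α → β, Set.BijOn e {a | a ∈ s} {b | b ∈ t} ∧ ∀ a ∈ s, R a (e a) := by
  classical
  induction h with
  | zero => exact ⟨fun _ => Classical.arbitrary β, by simp, by simp⟩
  | @cons a b s t hab _ ih =>
    rw [Multiset.nodup_cons] at hs ht
    obtain ⟨e, he, hR⟩ := ih hs.2 ht.2
    have heq : Set.EqOn (Function.update e a b) e {x | x ∈ s} := fun x hx =>
      Function.update_of_ne (by rintro rfl; exact hs.1 hx) _ _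
    refine ⟨Function.update e a b, ?_, ?_⟩
    · have := (he.congr heq.symm).insert (a := a) (by simpa using ht.1)
      rw [Function.update_self] at this
      convert this using 1 <;> ext <;> simp
    · intro x hx
      rcases Multiset.mem_cons.mp hx with rfl | hx
      · simpa using hab
      · rw [heq hx]
        exact hR x hx

namespace SimpleGraph

variable {V W L : Type} {G : SimpleGraph V} {H : SimpleGraph W} {labG : V → L} {labH : W → L}

structure IsRootedIsoOn (G : SimpleGraph V) (H : SimpleGraph W) (labG : V → L) (labH : W → L)
    (A : Set V) (B : Set W) (y : V) (z : W) (f : V → W) : Prop where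
  bijOn : Set.BijOn f A B
  root_mem : y ∈ A
  map_root : f y = z
  label_map : ∀ a ∈ A, labH (f a) = labG a
  adj_map_iff : ∀ a ∈ A, ∀ b ∈ A, H.Adj (f a) (f b) ↔ G.Adj a b

theorem isRootedIsoOn_singleton {y : V} {z : W} (h : labG y = labH z) :
    IsRootedIsoOn G H labG labH {y} {z} y z fun _ => z where
  bijOn := Set.bijOn_singleton.mpr rfl
  root_mem := rfl
  map_root := rfl
  label_map a ha := by rw [Set.mem_singleton_iff.mp ha, h]
  adj_map_iff a ha b hb := by simp [Set.mem_singleton_iff.mp ha, Set.mem_singleton_iff.mp hb]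

theorem IsRootedIsoOn.map_eq_root_iff {A : Set V} {B : Set W} {y : V} {z : W} {f : V → W}
    (hf : IsRootedIsoOn G H labG labH A B y z f) {a : V} (ha : a ∈ A) : f a = z ↔ a = y :=
  ⟨fun h => hf.bijOn.injOn ha hf.root_mem (h.trans hf.map_root.symm),
    fun h => h ▸ hf.map_root⟩

noncomputable def IsRootedIsoOn.inducedIso {A : Set V} {B : Set W} {y : V} {z : W} {f : V → W}
    (hf : IsRootedIsoOn G H labG labH A B y z f) : G.induce A ≃g H.induce B where
  toEquiv := hf.bijOn.equiv f
  map_rel_iff' {a b} := hf.adj_map_iff a a.2 b b.2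

noncomputable def glue (s : Set V) (A : V → Set V) (F : V → V → W) (z : W) (a : V) : W :=
  open Classical in if h : ∃ c ∈ s, a ∈ A c then F h.choose a else z

theorem glue_of_mem {s : Set V} {A : V → Set V} (hA : s.PairwiseDisjoint A) (F : V → V → W)
    (z : W) {c a : V} (hc : c ∈ s) (ha : a ∈ A c) : glue s A F z a = F c a := by
  have h : ∃ c ∈ s, a ∈ A c := ⟨c, hc, ha⟩
  rw [glue, dif_pos h, hA.elim_set h.choose_spec.1 hc a h.choose_spec.2 ha]

theorem glue_of_forall_notMem {s : Set V} {A : V → Set V} (F : V → V → W) (z : W) {a : V}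
    (ha : ∀ c ∈ s, a ∉ A c) : glue s A F z a = z := by
  rw [glue, dif_neg (by simpa using ha)]

variable {y : V} {z : W} {s : Set V} {t : Set W} {A : V → Set V} {B : W → Set W}
  {e : V → W} {F : V → V → W}

theorem IsStarDecomp.bijOn_glue (hA : G.IsStarDecomp y s A) (hB : H.IsStarDecomp z t B)
    (he : Set.BijOn e s t)
    (hF : ∀ c ∈ s, IsRootedIsoOn G H labG labH (A c) (B (e c)) c (e c) (F c)) :
    Set.BijOn (glue s A F z) (insert y (⋃ c ∈ s, A c)) (insert z (⋃ d ∈ t, B d)) := by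
  have hmaps : ∀ c ∈ s, ∀ a ∈ A c, glue s A F z a ∈ B (e c) := fun c hc a ha => by
    rw [glue_of_mem hA.pairwiseDisjoint F z hc ha]
    exact (hF c hc).bijOn.mapsTo ha
  have hunion : Set.BijOn (glue s A F z) (⋃ c ∈ s, A c) (⋃ d ∈ t, B d) := by
    refine ⟨?_, ?_, ?_⟩
    · intro a ha
      obtain ⟨c, hc, ha⟩ := Set.mem_iUnion₂.mp ha
      exact Set.mem_biUnion (he.mapsTo hc) (hmaps c hc a ha)
    · intro a ha a' ha' haa'
      obtain ⟨c, hc, ha⟩ := Set.mem_iUnion₂.mp ha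
      obtain ⟨c', hc', ha'⟩ := Set.mem_iUnion₂.mp ha'
      obtain rfl : c = c' := he.injOn hc hc' (hB.pairwiseDisjoint.elim_set (he.mapsTo hc)
        (he.mapsTo hc') _ (hmaps c hc a ha) (haa' ▸ hmaps c' hc' a' ha'))
      rw [glue_of_mem hA.pairwiseDisjoint F z hc ha,
        glue_of_mem hA.pairwiseDisjoint F z hc ha'] at haa'
      exact (hF c hc).bijOn.injOn ha ha' haa'
    · intro b hb
      obtain ⟨d, hd, hb⟩ := Set.mem_iUnion₂.mp hb
      obtain ⟨c, hc, rfl⟩ := he.surjOn hd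
      obtain ⟨a, ha, rfl⟩ := (hF c hc).bijOn.surjOn hb
      exact ⟨a, Set.mem_biUnion hc ha, glue_of_mem hA.pairwiseDisjoint F z hc ha⟩
  have hy : glue s A F z y = z := glue_of_forall_notMem F z hA.notMem
  have hz : z ∉ ⋃ d ∈ t, B d := by
    simpa only [Set.mem_iUnion, not_exists] using hB.notMem
  simpa only [hy] using hunion.insert (a := y) (by rwa [hy])

theorem IsStarDecomp.isRootedIsoOn_glue (hA : G.IsStarDecomp y s A) (hB : H.IsStarDecomp z t B)
    (he : Set.BijOn e s t) (hyz : labG y = labH z)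
    (hF : ∀ c ∈ s, IsRootedIsoOn G H labG labH (A c) (B (e c)) c (e c) (F c)) :
    IsRootedIsoOn G H labG labH (insert y (⋃ c ∈ s, A c)) (insert z (⋃ d ∈ t, B d)) y z
      (glue s A F z) := by
  have hfc {c a} (hc : c ∈ s) (ha : a ∈ A c) : glue s A F z a = F c a :=
    glue_of_mem hA.pairwiseDisjoint F z hc ha
  have hy : glue s A F z y = z := glue_of_forall_notMem F z hA.notMem
  have hadj_root {c a} (hc : c ∈ s) (ha : a ∈ A c) :
      H.Adj z (glue s A F z a) ↔ G.Adj y a := by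
    rw [hfc hc ha, hB.adj_iff _ (he.mapsTo hc) _ ((hF c hc).bijOn.mapsTo ha),
      (hF c hc).map_eq_root_iff ha, hA.adj_iff c hc a ha]
  refine ⟨hA.bijOn_glue hB he hF, Set.mem_insert y _, hy, ?_, ?_⟩
  · rintro a (rfl | ha)
    · rw [hy, hyz]
    · obtain ⟨c, hc, ha⟩ := Set.mem_iUnion₂.mp ha
      rw [hfc hc ha]
      exact (hF c hc).label_map a ha
  · rintro a (rfl | ha) b (rfl | hb)
    · simp
    · obtain ⟨c, hc, hb⟩ := Set.mem_iUnion₂.mp hb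
      rw [hy, hadj_root hc hb]
    · obtain ⟨c, hc, ha⟩ := Set.mem_iUnion₂.mp ha
      rw [hy, H.adj_comm, G.adj_comm, hadj_root hc ha]
    · obtain ⟨c, hc, ha⟩ := Set.mem_iUnion₂.mp ha
      obtain ⟨c', hc', hb⟩ := Set.mem_iUnion₂.mp hb
      rw [hfc hc ha, hfc hc' hb]
      by_cases hcc : c = c'
      · subst hcc
        exact (hF c hc).adj_map_iff a ha b hb
      · exact iff_of_false
          (hB.not_adj _ (he.mapsTo hc) _ (he.mapsTo hc') (he.injOn.ne hc hc' hcc)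
            _ ((hF c hc).bijOn.mapsTo ha) _ ((hF c' hc').bijOn.mapsTo hb))
          (hA.not_adj c hc c' hc' hcc a ha b hb)

theorem exists_isRootedIsoOn_insert_biUnion_branch {γ : Type*}
    (hG : G.IsTree) (hH : H.IsTree) {r : ℕ} {y : V} {z : W} (hyz : labG y = labH z)
    {s : Finset V} {t : Finset W} (hs : ∀ c ∈ s, G.Adj y c) (ht : ∀ d ∈ t, H.Adj z d)
    {κG : V → γ} {κH : W → γ} (hst : s.val.map κG = t.val.map κH)
    (ih : ∀ c ∈ s, ∀ d ∈ t, κG c = κH d →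
      ∃ f, IsRootedIsoOn G H labG labH (G.branch y c r) (H.branch z d r) c d f) :
    ∃ f, IsRootedIsoOn G H labG labH (insert y (⋃ c ∈ s, G.branch y c r))
      (insert z (⋃ d ∈ t, H.branch z d r)) y z f := by
  have : Nonempty W := ⟨z⟩
  have hrel : Multiset.Rel
      (fun c d => ∃ f, IsRootedIsoOn G H labG labH (G.branch y c r) (H.branch z d r) c d f)
      s.val t.val :=
    (Multiset.rel_map.mp (Multiset.rel_eq.mpr hst)).mono fun c hc d hd hcd => ih c hc d hd hcd
  obtain ⟨e, he, hiso⟩ := hrel.exists_bijOn s.nodup t.nodup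
  choose! F hF using hiso
  exact ⟨_,
    (hG.isStarDecomp_branch hs).isRootedIsoOn_glue (hH.isStarDecomp_branch ht) he hyz hF⟩

end SimpleGraph

open SimpleGraph

section ColorRefinementOnTrees

variable {V W L : Type} [Fintype V] [Fintype W] {G : SimpleGraph V} {H : SimpleGraph W}
  [DecidableRel G.Adj] [DecidableRel H.Adj] {labG : V → L} {labH : W → L}

theorem exists_isRootedIsoOn_branch (hG : G.IsTree) (hH : H.IsTree) (r : ℕ) {w y : V} {x z : W}
    (hwy : G.Adj w y) (hxz : H.Adj x z) (hwx : crIter G labG r w = crIter H labH r x)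
    (hyz : crIter G labG r y = crIter H labH r z) :
    ∃ f, IsRootedIsoOn G H labG labH (G.branch w y r) (H.branch x z r) y z f := by
  induction r generalizing w y x z with
  | zero =>
    rw [branch_zero hG.connected hwy, branch_zero hH.connected hxz]
    exact ⟨_, isRootedIsoOn_singleton (label_eq_of_crIter_eq hyz)⟩
  | succ r ih =>
    classical
    have hs (c) (hc : c ∈ (G.neighborFinset y).erase w) : G.Adj y c :=
      (G.mem_neighborFinset y c).mp (Finset.mem_of_mem_erase hc)
    have ht (d) (hd : d ∈ (H.neighborFinset z).erase x) : H.Adj z d :=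
      (H.mem_neighborFinset z d).mp (Finset.mem_of_mem_erase hd)
    rw [hG.branch_succ hwy, hH.branch_succ hxz]
    refine exists_isRootedIsoOn_insert_biUnion_branch hG hH (label_eq_of_crIter_eq hyz) hs ht ?_
      fun c hc d hd hcd => ih (hs c hc) (ht d hd) (crIter_eq_of_crIter_succ_eq hyz) hcd
    rw [Finset.erase_val, Finset.erase_val,
      Multiset.map_erase_of_mem _ _ ((G.mem_neighborFinset y w).mpr hwy.symm),
      Multiset.map_erase_of_mem _ _ ((H.mem_neighborFinset z x).mpr hxz.symm),
      map_neighborFinset_eq_of_crIter_succ_eq hyz, crIter_eq_of_crIter_succ_eq hwx]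

theorem exists_isRootedIsoOn_ball (hG : G.IsTree) (hH : H.IsTree) (r : ℕ) {u : V} {v : W}
    (h : crIter G labG r u = crIter H labH r v) :
    ∃ f, IsRootedIsoOn G H labG labH {w | G.dist u w ≤ r} {w | H.dist v w ≤ r} u v f := by
  cases r with
  | zero =>
    rw [setOf_dist_le_zero hG.connected, setOf_dist_le_zero hH.connected]
    exact ⟨_, isRootedIsoOn_singleton (label_eq_of_crIter_eq h)⟩
  | succ r =>
    classical
    rw [setOf_dist_le_succ hG.connected, setOf_dist_le_succ hH.connected]
    exact exists_isRootedIsoOn_insert_biUnion_branch hG hH (label_eq_of_crIter_eq h)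
      (fun c hc => (G.mem_neighborFinset u c).mp hc) (fun d hd => (H.mem_neighborFinset v d).mp hd)
      (map_neighborFinset_eq_of_crIter_succ_eq h) fun c hc d hd hcd =>
        exists_isRootedIsoOn_branch hG hH r ((G.mem_neighborFinset u c).mp hc)
          ((H.mem_neighborFinset v d).mp hd) (crIter_eq_of_crIter_succ_eq h) hcd

end ColorRefinementOnTrees

/-- If two nodes of pointed finite labeled trees get the same color after `r` rounds of
color refinement (from the labeling-based initial coloring), then the radius-`r`
neighborhoods of the two distinguished nodes are isomorphic as pointed labeled graphs. -/
theorem tree_cr_eq_implies_ball_iso {V W L : Type} [Fintype V] [Fintype W]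
    (G : SimpleGraph V) (H : SimpleGraph W) [DecidableRel G.Adj] [DecidableRel H.Adj]
    (labG : V → L) (labH : W → L)
    (hG : G.IsTree) (hH : H.IsTree) (u : V) (v : W) (r : ℕ)
    (hcr : crIter G labG r u = crIter H labH r v) :
    ∃ φ : (G.induce {w : V | G.dist u w ≤ r}) ≃g (H.induce {w : W | H.dist v w ≤ r}),
      φ ⟨u, by simp [SimpleGraph.dist_self]⟩ = ⟨v, by simp [SimpleGraph.dist_self]⟩ ∧
      ∀ w : {w : V | G.dist u w ≤ r}, labH (φ w).val = labG w.val := by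
  obtain ⟨f, hf⟩ := exists_isRootedIsoOn_ball hG hH r hcr
  exact ⟨hf.inducedIso, Subtype.ext hf.map_root, fun w => hf.label_map w w.2⟩
end

section
/- If a node query Q and its complement Qᶜ are both closed under inverse functional bisimulations (i.e., whenever there is a functional bisimulation from K^w to G^u and G^u ∈ Q then K^w ∈ Q, and likewise for Qᶜ), then Q is closed under arbitrary bisimulations. -/
/-- `B` is a bisimulation between the labeled graphs `(G, labG)` and `(H, labH)`:
related nodes have equal labels and satisfy the back-and-forth conditions. -/
def IsBisim {V W L : Type} (G : SimpleGraph V) (labG : V → L)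
    (H : SimpleGraph W) (labH : W → L) (B : V → W → Prop) : Prop :=
  ∀ a b, B a b → labG a = labH b ∧
    (∀ a', G.Adj a a' → ∃ b', H.Adj b b' ∧ B a' b') ∧
    (∀ b', H.Adj b b' → ∃ a', G.Adj a a' ∧ B a' b')

/-!
Given a bisimulation `B` between `G^u` and `H^v`, the subgraph of `G × H` induced on `B`,
pointed at `(u, v)`, maps onto both `G^u` and `H^v` by functional bisimulations (its two
projections). Closure of `Q` under inverse functional bisimulations carries `G^u ∈ Q` to the
product, and closure of `Qᶜ` forbids `H^v ∉ Q`.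
-/

namespace IsBisim

variable {V W L : Type} {G : SimpleGraph V} {H : SimpleGraph W} {labG : V → L} {labH : W → L}
  {B : V → W → Prop}

def product (G : SimpleGraph V) (H : SimpleGraph W) (B : V → W → Prop) :
    SimpleGraph {p : V × W // B p.1 p.2} where
  Adj p q := G.Adj p.1.1 q.1.1 ∧ H.Adj p.1.2 q.1.2
  symm := ⟨fun _ _ h => ⟨h.1.symm, h.2.symm⟩⟩
  loopless := ⟨fun _ h => G.irrefl h.1⟩

theorem product_fst (hB : IsBisim G labG H labH B) :
    IsBisim (product G H B) (fun p => labG p.1.1) G labG (fun p a => p.1.1 = a) := by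
  rintro p a rfl
  refine ⟨rfl, fun q hpq => ⟨q.1.1, hpq.1, rfl⟩, fun a' ha' => ?_⟩
  obtain ⟨b', hb', hab'⟩ := (hB p.1.1 p.1.2 p.2).2.1 a' ha'
  exact ⟨⟨(a', b'), hab'⟩, ⟨ha', hb'⟩, rfl⟩

theorem product_snd (hB : IsBisim G labG H labH B) :
    IsBisim (product G H B) (fun p => labG p.1.1) H labH (fun p b => p.1.2 = b) := by
  rintro p b rfl
  refine ⟨(hB p.1.1 p.1.2 p.2).1, fun q hpq => ⟨q.1.2, hpq.2, rfl⟩, fun b' hb' => ?_⟩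
  obtain ⟨a', ha', hab'⟩ := (hB p.1.1 p.1.2 p.2).2.2 b' hb'
  exact ⟨⟨(a', b'), hab'⟩, ⟨ha', hb'⟩, rfl⟩

end IsBisim

theorem bisim_closed_of_functional_bisim_closed_general {L : Type}
    (Q : ∀ (V : Type) [Fintype V], SimpleGraph V → (V → L) → V → Prop)
    (hQ : ∀ (V W : Type) [Fintype V] [Fintype W] (G : SimpleGraph V) (labG : V → L)
      (H : SimpleGraph W) (labH : W → L) (u : V) (v : W) (h : V → W),
      h u = v → IsBisim G labG H labH (fun a b => h a = b) →
      Q W H labH v → Q V G labG u)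
    (hQc : ∀ (V W : Type) [Fintype V] [Fintype W] (G : SimpleGraph V) (labG : V → L)
      (H : SimpleGraph W) (labH : W → L) (u : V) (v : W) (h : V → W),
      h u = v → IsBisim G labG H labH (fun a b => h a = b) →
      ¬ Q W H labH v → ¬ Q V G labG u) :
    ∀ (V W : Type) [Fintype V] [Fintype W] (G : SimpleGraph V) (labG : V → L)
      (H : SimpleGraph W) (labH : W → L) (u : V) (v : W) (B : V → W → Prop),
      B u v → IsBisim G labG H labH B → Q V G labG u → Q W H labH v := by
  intro V W _ _ G labG H labH u v B huv hB hu
  classical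
  let uv : {p : V × W // B p.1 p.2} := ⟨(u, v), huv⟩
  have h_product : Q _ (IsBisim.product G H B) (fun p => labG p.1.1) uv :=
    hQ _ V _ _ G labG uv u _ rfl hB.product_fst hu
  by_contra hv
  exact hQc _ W _ _ H labH uv v _ rfl hB.product_snd hv h_product

/-- If a node query `Q` (an isomorphism-closed class of pointed finite labeled graphs)
and its complement are both closed under inverse functional bisimulations, then `Q` is
closed under arbitrary bisimulations. -/
theorem bisim_closed_of_functional_bisim_closed {L : Type}
    (Q : ∀ (V : Type) [Fintype V], SimpleGraph V → (V → L) → V → Prop)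
    (hiso : ∀ (V W : Type) [Fintype V] [Fintype W] (G : SimpleGraph V)
      (H : SimpleGraph W) (labG : V → L) (labH : W → L) (u : V) (φ : G ≃g H),
      (∀ x : V, labH (φ x) = labG x) → (Q V G labG u ↔ Q W H labH (φ u)))
    (hQ : ∀ (V W : Type) [Fintype V] [Fintype W] (G : SimpleGraph V) (labG : V → L)
      (H : SimpleGraph W) (labH : W → L) (u : V) (v : W) (h : V → W),
      h u = v → IsBisim G labG H labH (fun a b => h a = b) →
      Q W H labH v → Q V G labG u)
    (hQc : ∀ (V W : Type) [Fintype V] [Fintype W] (G : SimpleGraph V) (labG : V → L)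
      (H : SimpleGraph W) (labH : W → L) (u : V) (v : W) (h : V → W),
      h u = v → IsBisim G labG H labH (fun a b => h a = b) →
      ¬ Q W H labH v → ¬ Q V G labG u) :
    ∀ (V W : Type) [Fintype V] [Fintype W] (G : SimpleGraph V) (labG : V → L)
      (H : SimpleGraph W) (labH : W → L) (u : V) (v : W) (B : V → W → Prop),
      B u v → IsBisim G labG H labH B → Q V G labG u → Q W H labH v :=
  bisim_closed_of_functional_bisim_closed_general Q hQ hQc
end

section
/- Let G^u and H^v be pointed labeled graphs and suppose G^u is acyclic (a tree) while H^v contains a cycle. Then G^u and H^v are not color-refinement equivalent: there exists r such that the colors of u and v after r rounds of color refinement differ. Equivalently, for sufficiently large L the depth-L unravellings of G^u and H^v are non-isomorphic. -/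
/-!
If the colors of `u` and `v` agreed in every round, take a round after which color refinement
on the disjoint union of `G` and `H` no longer splits classes. The colorings of that round are
equitable for `G` and for `H` with one and the same neighbour-color function `M`. Double counting
the edges between two color classes shows that adjacent classes have sizes in the same ratio in
`G` as in `H`; by connectivity every class does, so the edge/vertex ratios of `G` and `H` agree.
But a tree has `|E| = |V| - 1`, while a connected graph with a cycle has `|E| ≥ |V|`.
-/

open Finset

theorem Finite.exists_factorsThrough_succ {X : Type*} [Finite X] {C : ℕ → Type*}
    (f : ∀ r, X → C r) (hf : ∀ r, (f r).FactorsThrough (f (r + 1))) :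
    ∃ r, (f (r + 1)).FactorsThrough (f r) := by
  let ker : ℕ → Set (X × X) := fun r => {p | f r p.1 = f r p.2}
  have hanti : Antitone ker := antitone_nat_of_succ_le fun r p hp => hf r hp
  obtain ⟨r, hr⟩ := WellFoundedLT.antitone_chain_condition hanti
  refine ⟨r, fun x y hxy => ?_⟩
  show (x, y) ∈ ker (r + 1)
  rwa [← hr (r + 1) r.le_succ]

theorem Finset.sum_univ_comp_eq_sum_card_smul {X C A : Type*} [Fintype X] [DecidableEq C]
    [AddCommMonoid A] (κ : X → C) {S : Finset C} (hS : ∀ x, κ x ∈ S) (f : C → A) :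
    ∑ x, f (κ x) = ∑ a ∈ S, #{x | κ x = a} • f a := by
  rw [← sum_fiberwise_of_maps_to (fun x _ => hS x)]
  refine sum_congr rfl fun a _ => ?_
  rw [sum_congr rfl fun x hx => congrArg f (mem_filter.1 hx).2, sum_const]

namespace SimpleGraph

theorem Connected.card_le_card_edgeFinset_of_not_isAcyclic {V : Type*} [Fintype V]
    {G : SimpleGraph V} [Fintype G.edgeSet] (hG : G.Connected) (hcyc : ¬ G.IsAcyclic) :
    Fintype.card V ≤ #G.edgeFinset := by
  have hle := hG.card_vert_le_card_edgeSet_add_one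
  have hne : Nat.card G.edgeSet + 1 ≠ Nat.card V := fun h =>
    hcyc (isTree_iff_connected_and_card.2 ⟨hG, h⟩).isAcyclic
  rw [Nat.card_eq_fintype_card, Nat.card_eq_fintype_card, ← edgeFinset_card] at hle hne
  omega

variable {V W C : Type*} [Fintype V] [Fintype W]
  {G : SimpleGraph V} {H : SimpleGraph W} [DecidableRel G.Adj] [DecidableRel H.Adj]

variable (G) in
def IsEquitable (κ : V → C) (M : C → Multiset C) : Prop :=
  ∀ x, (G.neighborFinset x).val.map κ = M (κ x)

variable {κ : V → C} {η : W → C} {M : C → Multiset C}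

theorem IsEquitable.degree_eq (hκ : G.IsEquitable κ M) (x : V) :
    G.degree x = Multiset.card (M (κ x)) := by
  rw [← hκ x, Multiset.card_map]
  rfl

variable [DecidableEq C]

theorem IsEquitable.count_eq (hκ : G.IsEquitable κ M) (x : V) (b : C) :
    (M (κ x)).count b = #{z | κ z = b ∧ G.Adj x z} := by
  rw [← hκ x, Multiset.count_map, ← filter_val, card_val, neighborFinset_eq_filter,
    filter_filter]
  simp only [eq_comm, and_comm]

theorem IsEquitable.count_pos_of_adj (hκ : G.IsEquitable κ M) {x z : V} (h : G.Adj x z) :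
    0 < (M (κ x)).count (κ z) := by
  rw [hκ.count_eq]
  exact card_pos.2 ⟨z, mem_filter.2 ⟨mem_univ z, rfl, h⟩⟩

theorem IsEquitable.card_mul_count_eq (hκ : G.IsEquitable κ M) (a b : C) :
    #{x | κ x = a} * (M a).count b = #{x | κ x = b} * (M b).count a := by
  refine card_mul_eq_card_mul G.Adj (fun x hx => ?_) (fun z hz => ?_)
  · rw [← (mem_filter.1 hx).2, hκ.count_eq x b, bipartiteAbove, filter_filter]
  · rw [← (mem_filter.1 hz).2, hκ.count_eq z a, bipartiteBelow, filter_filter]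
    simp only [adj_comm]

theorem IsEquitable.card_mul_card_eq_of_adj (hκ : G.IsEquitable κ M) (hη : H.IsEquitable η M)
    {x z : V} (h : G.Adj x z) :
    #{x' | κ x' = κ x} * #{y | η y = κ z} = #{x' | κ x' = κ z} * #{y | η y = κ x} := by
  have hG := hκ.card_mul_count_eq (κ x) (κ z)
  have hH := hη.card_mul_count_eq (κ x) (κ z)
  refine Nat.eq_of_mul_eq_mul_right
    (Nat.mul_pos (hκ.count_pos_of_adj h) (hκ.count_pos_of_adj h.symm)) ?_
  linear_combination (#{y | η y = κ z} * (M (κ z)).count (κ x)) * hG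
    - (#{x' | κ x' = κ z} * (M (κ z)).count (κ x)) * hH

theorem IsEquitable.card_mul_card_eq_of_reachable (hκ : G.IsEquitable κ M)
    (hη : H.IsEquitable η M) {u x : V} (h : G.Reachable u x) :
    #{x' | κ x' = κ x} * #{y | η y = κ u} = #{y | η y = κ x} * #{x' | κ x' = κ u} := by
  obtain ⟨p⟩ := h.symm
  clear h
  induction p with
  | nil => exact mul_comm _ _
  | @cons w w' t hadj _ ih =>
    have hstep := hκ.card_mul_card_eq_of_adj hη hadj.symm
    have hpos : 0 < #{x' | κ x' = κ w'} := card_pos.2 ⟨w', by simp⟩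
    refine Nat.eq_of_mul_eq_mul_left hpos ?_
    linear_combination #{x' | κ x' = κ w} * ih + #{x' | κ x' = κ t} * hstep.symm

theorem IsEquitable.card_mul_sum_comp_eq (hG : G.Connected) (hH : H.Connected)
    (hκ : G.IsEquitable κ M) (hη : H.IsEquitable η M) {u : V} {v : W} (huv : κ u = η v)
    (f : C → ℕ) :
    #{y | η y = κ u} * ∑ x, f (κ x) = #{x | κ x = κ u} * ∑ y, f (η y) := by
  have hS : ∀ x, κ x ∈ univ.image κ ∪ univ.image η := fun x => by simp
  have hS' : ∀ y, η y ∈ univ.image κ ∪ univ.image η := fun y => by simp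
  simp only [sum_univ_comp_eq_sum_card_smul κ hS, sum_univ_comp_eq_sum_card_smul η hS',
    smul_eq_mul, mul_sum]
  refine sum_congr rfl fun a ha => ?_
  obtain ⟨x, -, rfl⟩ | ⟨y, -, rfl⟩ := mem_union.1 ha |>.imp mem_image.1 mem_image.1
  · linear_combination f (κ x) * hκ.card_mul_card_eq_of_reachable hη (hG u x)
  · have hy := hη.card_mul_card_eq_of_reachable hκ (hH v y)
    rw [← huv] at hy
    linear_combination f (η y) * hy.symm

theorem IsEquitable.card_edgeFinset_mul_card_eq [DecidableEq V] [DecidableEq W]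
    (hG : G.Connected) (hH : H.Connected)
    (hκ : G.IsEquitable κ M) (hη : H.IsEquitable η M) {u : V} {v : W} (huv : κ u = η v) :
    #G.edgeFinset * Fintype.card W = #H.edgeFinset * Fintype.card V := by
  have hV := hκ.card_mul_sum_comp_eq hG hH hη huv 1
  have hE := hκ.card_mul_sum_comp_eq hG hH hη huv (fun a => Multiset.card (M a))
  simp only [Pi.one_apply, sum_const, card_univ, smul_eq_mul, mul_one] at hV
  simp only [← hκ.degree_eq, ← hη.degree_eq, sum_degrees_eq_twice_card_edges] at hE
  replace hE : #{y | η y = κ u} * #G.edgeFinset = #{x | κ x = κ u} * #H.edgeFinset := by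
    linarith
  have hp : 0 < #{x | κ x = κ u} := card_pos.2 ⟨u, by simp⟩
  have hq : 0 < #{y | η y = κ u} := card_pos.2 ⟨v, by simp [huv]⟩
  refine Nat.eq_of_mul_eq_mul_right (Nat.mul_pos hp hq) ?_
  linear_combination (Fintype.card W * #{x | κ x = κ u}) * hE
    - (#H.edgeFinset * #{x | κ x = κ u}) * hV

end SimpleGraph

theorem exists_isEquitable_crIter_of_factorsThrough {V W L : Type} [Fintype V] [Fintype W]
    {G : SimpleGraph V} {H : SimpleGraph W} [DecidableRel G.Adj] [DecidableRel H.Adj]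
    {labG : V → L} {labH : W → L} {r : ℕ}
    (hr : (Sum.elim (crIter G labG (r + 1)) (crIter H labH (r + 1))).FactorsThrough
      (Sum.elim (crIter G labG r) (crIter H labH r))) :
    ∃ M, G.IsEquitable (crIter G labG r) M ∧ H.IsEquitable (crIter H labH r) M := by
  have hft : Function.FactorsThrough
      (fun z => (Sum.elim (crIter G labG (r + 1)) (crIter H labH (r + 1)) z).2)
      (Sum.elim (crIter G labG r) (crIter H labH r)) :=
    fun z z' h => congrArg Prod.snd (hr h)
  exact ⟨_, fun x => (hft.extend_apply 0 (Sum.inl x)).symm,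
    fun y => (hft.extend_apply 0 (Sum.inr y)).symm⟩

/-- If `G^u` is a pointed finite labeled tree while the pointed finite labeled connected
graph `H^v` contains a cycle, then `G^u` and `H^v` are not color-refinement equivalent:
after some number `r` of rounds of color refinement (from the labeling-based initial
colorings) the distinguished nodes receive different colors. -/
theorem tree_cycle_not_cr_equivalent {V W L : Type} [Fintype V] [Fintype W]
    (G : SimpleGraph V) (H : SimpleGraph W) [DecidableRel G.Adj] [DecidableRel H.Adj]
    (labG : V → L) (labH : W → L) (u : V) (v : W)
    (hG : G.IsTree) (hHconn : H.Connected) (hHcyc : ¬ H.IsAcyclic) :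
    ∃ r : ℕ, crIter G labG r u ≠ crIter H labH r v := by
  classical
  by_contra! hcr
  obtain ⟨r, hr⟩ := Finite.exists_factorsThrough_succ
    (fun r => Sum.elim (crIter G labG r) (crIter H labH r))
    (fun r z z' h => by cases z <;> cases z' <;> exact congrArg Prod.fst h)
  obtain ⟨M, hMG, hMH⟩ := exists_isEquitable_crIter_of_factorsThrough hr
  have hratio := hMG.card_edgeFinset_mul_card_eq hG.connected hHconn hMH (hcr r)
  have htree := hG.card_edgeFinset
  have hcyc := hHconn.card_le_card_edgeFinset_of_not_isAcyclic hHcyc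
  have hW : 0 < Fintype.card W := Fintype.card_pos_iff.2 ⟨v⟩
  nlinarith
end
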